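/- arXiv:1611.04141 — 10 statements merged into one kernel-verified Lean document; each statement's English description precedes it below -/
import Mathlib

section
/- Let w ∈ H solve a(w,χ) = a(u,χ) − λ(u)(u,χ) for all χ ∈ H, where u ∈ H has ‖u‖₀ = 1 and u is not an eigenvector (u ≠ 0), and let v ∈ H satisfy ‖v − w‖ ≤ η‖w‖ with 0 ≤ η < 1. Then ‖u − v‖ ≥ (1 − η)‖u − w‖; in particular, since ‖u − w‖² = ‖u‖² + ‖w‖² > 0, also u − v ≠ 0. -/
open scoped RealInnerProductSpace

/-- The Rayleigh quotient `λ(u) = a(u,u)/(u,u)`, where `a = ⟪·,·⟫` is the inner product of the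
Hilbert space `H` (inducing the energy norm `‖·‖`) and `b` is the second inner product `(·,·)`
(inducing the weaker norm `‖·‖₀ = √(b u u)`). Note `⟪u,u⟫ = ‖u‖²`. -/
noncomputable def rayleigh {H : Type*} [NormedAddCommGroup H] [InnerProductSpace ℝ H]
    (b : LinearMap.BilinForm ℝ H) (u : H) : ℝ :=
  ‖u‖ ^ 2 / b u u

/-!
Testing the defining equation of `w` with `χ = u` gives `a(w,u) = a(u,u) - λ(u)(u,u) = 0`, so
`u - w` is the hypotenuse of a right triangle and `‖w‖, ‖u‖ ≤ ‖u - w‖`. The triangle inequality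
then gives `‖u - v‖ ≥ ‖u - w‖ - ‖v - w‖ ≥ ‖u - w‖ - η‖w‖ ≥ (1 - η)‖u - w‖`, which is positive
because `‖u - w‖ ≥ ‖u‖ > 0`.
-/

theorem inner_eq_zero_of_forall_inner_eq_sub_rayleigh_mul {H : Type*} [NormedAddCommGroup H]
    [InnerProductSpace ℝ H] (b : LinearMap.BilinForm ℝ H) {u w : H} (hbu : b u u ≠ 0)
    (hw : ∀ χ : H, ⟪w, χ⟫ = ⟪u, χ⟫ - rayleigh b u * b u χ) :
    ⟪u, w⟫ = 0 := by
  rw [real_inner_comm, hw u, rayleigh, div_mul_cancel₀ _ hbu,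
    real_inner_self_eq_norm_sq, sub_self]

section Pythagoras

variable {F : Type*} [NormedAddCommGroup F] [InnerProductSpace ℝ F] {x y : F}

theorem norm_le_norm_sub_of_inner_eq_zero (h : ⟪x, y⟫ = 0) : ‖x‖ ≤ ‖x - y‖ := by
  rw [mul_self_le_mul_self_iff (norm_nonneg _) (norm_nonneg _),
    norm_sub_sq_eq_norm_sq_add_norm_sq_real h]
  exact le_add_of_nonneg_right (mul_self_nonneg _)

theorem norm_le_norm_sub_of_inner_eq_zero' (h : ⟪x, y⟫ = 0) : ‖y‖ ≤ ‖x - y‖ := by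
  rw [norm_sub_rev]
  exact norm_le_norm_sub_of_inner_eq_zero (by rwa [real_inner_comm])

end Pythagoras

theorem one_sub_mul_norm_sub_le_norm_sub {E : Type*} [SeminormedAddCommGroup E] {u v w : E}
    {η : ℝ} (hη : 0 ≤ η) (hw : ‖w‖ ≤ ‖u - w‖) (hv : ‖v - w‖ ≤ η * ‖w‖) :
    (1 - η) * ‖u - w‖ ≤ ‖u - v‖ :=
  calc (1 - η) * ‖u - w‖ ≤ ‖u - w‖ - η * ‖w‖ := by nlinarith
    _ ≤ ‖u - w‖ - ‖v - w‖ := by linarith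
    _ ≤ ‖u - v‖ := by
      simpa only [sub_sub_sub_cancel_right] using norm_sub_norm_le (u - w) (v - w)

theorem approximate_iterate_nonzero_general {H : Type*} [NormedAddCommGroup H] [InnerProductSpace ℝ H]
    (b : LinearMap.BilinForm ℝ H)
    (u w v : H) (hu : b u u = 1) (hu0 : u ≠ 0)
    (hw : ∀ χ : H, ⟪w, χ⟫ = ⟪u, χ⟫ - rayleigh b u * b u χ)
    (eta : ℝ) (heta0 : 0 ≤ eta) (heta1 : eta < 1)
    (hv : ‖v - w‖ ≤ eta * ‖w‖) :
    (1 - eta) * ‖u - w‖ ≤ ‖u - v‖ ∧ u - v ≠ 0 := by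
  have horth : ⟪u, w⟫ = 0 :=
    inner_eq_zero_of_forall_inner_eq_sub_rayleigh_mul b (hu ▸ one_ne_zero) hw
  have hmain := one_sub_mul_norm_sub_le_norm_sub heta0
    (norm_le_norm_sub_of_inner_eq_zero' horth) hv
  refine ⟨hmain, fun huv => ?_⟩
  have hpos : 0 < (1 - eta) * ‖u - w‖ :=
    mul_pos (sub_pos.2 heta1) <| (norm_pos_iff.2 hu0).trans_le
      (norm_le_norm_sub_of_inner_eq_zero horth)
  rw [huv, norm_zero] at hmain
  linarith

/-- with `‖v − w‖ ≤ η‖w‖`, `0 ≤ η < 1`, one has `‖u − v‖ ≥ (1 − η)‖u − w‖`,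
and in particular `u − v ≠ 0`. -/
theorem approximate_iterate_nonzero {H : Type*} [NormedAddCommGroup H] [InnerProductSpace ℝ H] [CompleteSpace H]
    (b : LinearMap.BilinForm ℝ H)
    (hb_symm : ∀ x y : H, b x y = b y x)
    (hb_pos : ∀ x : H, x ≠ 0 → 0 < b x x)
    (u w v : H) (hu : b u u = 1) (hu0 : u ≠ 0)
    (hw : ∀ χ : H, ⟪w, χ⟫ = ⟪u, χ⟫ - rayleigh b u * b u χ)
    (eta : ℝ) (heta0 : 0 ≤ eta) (heta1 : eta < 1)
    (hv : ‖v - w‖ ≤ eta * ‖w‖) :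
    (1 - eta) * ‖u - w‖ ≤ ‖u - v‖ ∧ u - v ≠ 0 :=
  approximate_iterate_nonzero_general b u w v hu hu0 hw eta heta0 heta1 hv
end

section
/- Let u ∈ H with ‖u‖₀ = 1 and λ = λ(u) satisfy λ₁ ≤ λ < λ₂, and let w ∈ H be the unique solution of a(w,χ) = a(u,χ) − λ(u,χ) for all χ ∈ H. Then the energy norm of w satisfies ‖w‖² ≥ ((λ₂ − λ)/λ₂)²(λ − λ₁). -/
open scoped RealInnerProductSpace

set_option maxHeartbeats 1000000 in
/-- Lemma 3.1: lower bound `‖w‖² ≥ ((λ₂ − λ)/λ₂)²(λ − λ₁)` for the solution `w`. -/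
theorem energy_norm_w_lower_bound {H : Type*} [NormedAddCommGroup H] [InnerProductSpace ℝ H] [CompleteSpace H]
    (b : LinearMap.BilinForm ℝ H)
    (hb_symm : ∀ x y : H, b x y = b y x)
    (hb_pos : ∀ x : H, x ≠ 0 → 0 < b x x)
    (lam1 : ℝ) (hlam1 : 0 < lam1)
    (hmin : ∀ x : H, x ≠ 0 → lam1 ≤ rayleigh b x)
    (hE1 : ∃ x : H, x ≠ 0 ∧ ∀ χ : H, ⟪ x, χ⟫ = lam1 * b x χ)
    (lam2 : ℝ) (hlam12 : lam1 < lam2)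
    (hmin2 : ∀ x : H, x ≠ 0 →
      (∀ χ₁ : H, (∀ χ : H, ⟪χ₁, χ⟫ = lam1 * b χ₁ χ) → b x χ₁ = 0) →
      lam2 ≤ rayleigh b x)
    (u w : H) (hu : b u u = 1) (hlt : rayleigh b u < lam2)
    (hw : ∀ χ : H, ⟪w, χ⟫ = ⟪u, χ⟫ - rayleigh b u * b u χ) :
    ((lam2 - rayleigh b u) / lam2) ^ 2 * (rayleigh b u - lam1) ≤ ‖w‖ ^ 2 := by
  classical
  set L := rayleigh b u with hL
  -- basic facts about b
  have hbnn : ∀ x : H, 0 ≤ b x x := by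
    intro x
    rcases eq_or_ne x 0 with h | h
    · simp [h]
    · exact (hb_pos x h).le
  -- u ≠ 0
  have hu0 : u ≠ 0 := by
    intro h
    rw [h] at hu; simp at hu
  have hL1 : lam1 ≤ L := hmin u hu0
  have hLnorm : L = ‖u‖ ^ 2 := by rw [hL, rayleigh, hu, div_one]
  have hL0 : 0 ≤ L := le_trans hlam1.le hL1
  have hlam2 : 0 < lam2 := lt_trans hlam1 hlam12
  -- bounds for b in terms of the energy norm
  have hble : ∀ x : H, lam1 * b x x ≤ ‖x‖ ^ 2 := by
    intro x
    rcases eq_or_ne x 0 with h | h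
    · simp [h]
    · have h1 := hmin x h
      rw [rayleigh] at h1
      have h2 := hb_pos x h
      rw [le_div_iff₀ h2] at h1
      linarith
  have hCS : ∀ x y : H, (b x y) ^ 2 ≤ b x x * b y y := by
    intro x y
    rcases eq_or_ne y 0 with h | h
    · simp [h]
    · have hy := hb_pos y h
      have hxy : b y x = b x y := hb_symm y x
      have key : ∀ t : ℝ, 0 ≤ b x x - 2 * t * b x y + t ^ 2 * b y y := by
        intro t
        have h0 := hbnn (x - t • y)
        simp only [map_sub, map_smul, LinearMap.sub_apply, LinearMap.smul_apply,
          smul_eq_mul] at h0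
        rw [hxy] at h0
        nlinarith [h0]
      have hne : b y y ≠ 0 := ne_of_gt hy
      obtain ⟨s, hs⟩ : ∃ s : ℝ, s * b y y = b x y :=
        ⟨b x y / b y y, div_mul_cancel₀ _ hne⟩
      have h4 := mul_nonneg (key s) hy.le
      have e1 : s ^ 2 * (b y y * b y y) = b x y ^ 2 := by rw [← hs]; ring
      have e3 : s * b y y * b x y = b x y * b x y := by rw [hs]
      nlinarith [h4, e1, e3]
  -- the eigenspace E₁ as a closed submodule
  let K : Submodule ℝ H :=
    { carrier := {x | ∀ χ : H, ⟪x, χ⟫ = lam1 * b x χ}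
      add_mem' := by
        intro a c ha hc χ
        simp only [inner_add_left, ha χ, hc χ, map_add, LinearMap.add_apply]
        ring
      zero_mem' := by intro χ; simp
      smul_mem' := by
        intro r x hx χ
        simp only [inner_smul_left, hx χ, map_smul, LinearMap.smul_apply,
          smul_eq_mul, starRingEnd_apply, star_trivial]
        ring }
  have hKmem : ∀ x : H, x ∈ K ↔ ∀ χ : H, ⟪x, χ⟫ = lam1 * b x χ := fun x => Iff.rfl
  have hKclosed : IsClosed (K : Set H) := by
    have hset : (K : Set H) = ⋂ χ : H, {x : H | ⟪x, χ⟫ = lam1 * b x χ} := by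
      ext x
      simp only [Set.mem_iInter, Set.mem_setOf_eq, SetLike.mem_coe, hKmem]
    rw [hset]
    refine isClosed_iInter fun χ => ?_
    have hc1 : Continuous fun x : H => ⟪x, χ⟫ := continuous_id.inner continuous_const
    have hc2 : Continuous fun x : H => lam1 * b x χ := by
      have hb : Continuous fun x : H => b x χ := by
        have hflin : IsLinearMap ℝ (fun x : H => b x χ) := by
          constructor
          · intro a c; simp [map_add]
          · intro r a; simp [map_smul]
        refine AddMonoidHomClass.continuous_of_bound hflin.mk' (b χ χ / lam1 + 1)
          fun x => ?_
        have h1 : (b x χ) ^ 2 ≤ b x x * b χ χ := hCS x χ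
        have h2 : lam1 * b x x ≤ ‖x‖ ^ 2 := hble x
        have h3 : 0 ≤ b χ χ := hbnn χ
        have h4 : 0 ≤ b x x := hbnn x
        simp only [IsLinearMap.mk'_apply, Real.norm_eq_abs]
        have hd0 : 0 ≤ b χ χ / lam1 := div_nonneg h3 hlam1.le
        have hd : lam1 * (b χ χ / lam1) = b χ χ := by field_simp
        have m1 : lam1 * (b x χ) ^ 2 ≤ lam1 * (b x x * b χ χ) :=
          mul_le_mul_of_nonneg_left h1 hlam1.le
        have m2 : lam1 * b x x * b χ χ ≤ ‖x‖ ^ 2 * b χ χ :=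
          mul_le_mul_of_nonneg_right h2 h3
        have hd2 : ‖x‖ ^ 2 * (lam1 * (b χ χ / lam1)) = ‖x‖ ^ 2 * b χ χ := by rw [hd]
        have m3 : (b x χ) ^ 2 ≤ ‖x‖ ^ 2 * (b χ χ / lam1) := by
          apply le_of_mul_le_mul_left _ hlam1
          nlinarith [m1, m2, hd2]
        have m4 : (b x χ) ^ 2 ≤ ((b χ χ / lam1 + 1) * ‖x‖) ^ 2 := by
          nlinarith [m3, mul_nonneg hd0 (sq_nonneg ‖x‖),
            mul_nonneg (mul_nonneg hd0 hd0) (sq_nonneg ‖x‖)]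
        have hC : 0 ≤ (b χ χ / lam1 + 1) * ‖x‖ :=
          mul_nonneg (by linarith) (norm_nonneg x)
        nlinarith [m4, sq_abs (b x χ), abs_nonneg (b x χ), hC]
      exact continuous_const.mul hb
    exact isClosed_eq hc1 hc2
  haveI : CompleteSpace K := hKclosed.completeSpace_coe
  obtain ⟨v, hvK, p, hpK, hu_eq⟩ : ∃ v ∈ K, ∃ p ∈ Kᗮ, u = v + p :=
    ⟨K.starProjection u, (K.orthogonalProjectionOnto u).2, u - K.starProjection u, K.sub_starProjection_mem_orthogonal u,
      by abel⟩
  -- orthogonality relations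
  have hvp : ⟪v, p⟫ = 0 := (Submodule.mem_orthogonal K p).mp hpK v hvK
  have hbvp : b v p = 0 := by
    have h1 := (hKmem v).mp hvK p
    rw [hvp] at h1
    linarith [(mul_eq_zero.mp h1.symm).resolve_left (ne_of_gt hlam1)]
  have hbpv : b p v = 0 := by rw [hb_symm]; exact hbvp
  have hvv : ⟪v, v⟫ = lam1 * b v v := (hKmem v).mp hvK v
  -- decompositions
  have hbu : b u u = b v v + b p p := by
    rw [hu_eq]
    simp only [map_add, LinearMap.add_apply, hbvp, hbpv]
    ring
  have hnu : ⟪u, u⟫ = ⟪v, v⟫ + ⟪p, p⟫ := by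
    rw [hu_eq, real_inner_add_add_self, hvp]
    ring
  have hinner_self : ∀ x : H, ⟪x, x⟫ = ‖x‖ ^ 2 := fun x => real_inner_self_eq_norm_sq x
  -- λ − λ₁ = ⟪p,p⟫ − λ₁ b(p,p)
  have hkey1 : L - lam1 = ⟪p, p⟫ - lam1 * b p p := by
    have h1 : L = ⟪v, v⟫ + ⟪p, p⟫ := by rw [hLnorm, ← hinner_self, hnu]
    have h2 : (1 : ℝ) = b v v + b p p := by rw [← hu, hbu]
    rw [h1, hvv]
    nlinarith [h2]
  have hkey2 : L - lam1 ≤ ‖p‖ ^ 2 := by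
    rw [hkey1, hinner_self p]
    nlinarith [mul_nonneg hlam1.le (hbnn p)]
  -- ⟪w, p⟫ = ‖p‖² − L · b p p
  have hwp : ⟪w, p⟫ = ‖p‖ ^ 2 - L * b p p := by
    rw [hw p]
    have h1 : ⟪u, p⟫ = ⟪p, p⟫ := by
      rw [hu_eq, inner_add_left, hvp, zero_add]
    have h2 : b u p = b p p := by
      rw [hu_eq, map_add, LinearMap.add_apply, hbvp, zero_add]
    rw [h1, h2, hinner_self p]
  rcases eq_or_ne p 0 with hp0 | hp0
  · -- degenerate case: u is an eigenfunction, λ = λ₁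
    have hle : L - lam1 ≤ 0 := by
      rw [hkey1, hp0]
      simp
    nlinarith [sq_nonneg ((lam2 - L) / lam2), sq_nonneg ‖w‖,
      mul_nonneg (sq_nonneg ((lam2 - L) / lam2)) (neg_nonneg.mpr hle)]
  · -- main case
    have hbpp : 0 < b p p := hb_pos p hp0
    have hP : 0 < ‖p‖ := norm_pos_iff.mpr hp0
    -- p is b-orthogonal to all eigenfunctions
    have horth : ∀ χ₁ : H, (∀ χ : H, ⟪χ₁, χ⟫ = lam1 * b χ₁ χ) → b p χ₁ = 0 := by
      intro χ₁ hχ₁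
      have hmem : χ₁ ∈ K := (hKmem χ₁).mpr hχ₁
      have h1 := hχ₁ p
      have h2 : ⟪χ₁, p⟫ = 0 := (Submodule.mem_orthogonal K p).mp hpK χ₁ hmem
      rw [h2] at h1
      have h3 : b χ₁ p = 0 :=
        (mul_eq_zero.mp h1.symm).resolve_left (ne_of_gt hlam1)
      rw [hb_symm]; exact h3
    have hray := hmin2 p hp0 horth
    rw [rayleigh, le_div_iff₀ hbpp] at hray
    have hCSwp : ⟪w, p⟫ ≤ ‖w‖ * ‖p‖ := real_inner_le_norm w p
    have hW : 0 ≤ ‖w‖ := norm_nonneg w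
    have h6 : ‖p‖ * (lam2 - L) ≤ lam2 * ‖w‖ := by
      have e1 : L * (lam2 * b p p) ≤ L * ‖p‖ ^ 2 := mul_le_mul_of_nonneg_left hray hL0
      have e2 : lam2 * (‖p‖ ^ 2 - L * b p p) ≤ lam2 * (‖w‖ * ‖p‖) := by
        apply mul_le_mul_of_nonneg_left _ hlam2.le
        rw [← hwp]; exact hCSwp
      have e3 : ‖p‖ * (‖p‖ * (lam2 - L)) ≤ ‖p‖ * (lam2 * ‖w‖) := by nlinarith [e1, e2]
      exact le_of_mul_le_mul_left e3 hP
    have h7 : (‖p‖ * (lam2 - L)) ^ 2 ≤ (lam2 * ‖w‖) ^ 2 := by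
      have hnn : 0 ≤ ‖p‖ * (lam2 - L) := mul_nonneg hP.le (by linarith)
      exact pow_le_pow_left₀ hnn h6 2
    rw [div_pow, div_mul_eq_mul_div, div_le_iff₀ (by positivity : (0:ℝ) < lam2 ^ 2)]
    nlinarith [h7, mul_le_mul_of_nonneg_left hkey2 (sq_nonneg (lam2 - L))]
end

section
/- Let u ∈ H with ‖u‖₀ = 1 and λ = λ(u), let w ∈ H be the unique solution of a(w,χ) = a(u,χ) − λ(u,χ) for all χ ∈ H with w ≠ 0, let 0 ≤ η < 1, let v ∈ H satisfy ‖v − w‖ ≤ η‖w‖, and set u' = (u − v)/‖u − v‖₀ and λ' = λ(u'). Then λ − λ' ≥ λ(1 − η²)‖w‖² / (λ + (1 − η²)‖w‖²). -/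
open scoped RealInnerProductSpace

/-- Lemma 3.2: `λ − λ' ≥ λ(1 − η²)‖w‖² / (λ + (1 − η²)‖w‖²)` where
`u' = (u − v)/‖u − v‖₀` and `λ' = λ(u')`. -/
theorem rayleigh_decrease_lower_bound {H : Type*} [NormedAddCommGroup H] [InnerProductSpace ℝ H] [CompleteSpace H]
    (b : LinearMap.BilinForm ℝ H)
    (hb_symm : ∀ x y : H, b x y = b y x)
    (hb_pos : ∀ x : H, x ≠ 0 → 0 < b x x)
    (lam1 : ℝ) (hlam1 : 0 < lam1)
    (hmin : ∀ x : H, x ≠ 0 → lam1 ≤ rayleigh b x)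
    (u w v : H) (hu : b u u = 1)
    (hw : ∀ χ : H, ⟪w, χ⟫ = ⟪u, χ⟫ - rayleigh b u * b u χ)
    (hw0 : w ≠ 0)
    (eta : ℝ) (heta0 : 0 ≤ eta) (heta1 : eta < 1)
    (hv : ‖v - w‖ ≤ eta * ‖w‖) :
    rayleigh b u * (1 - eta ^ 2) * ‖w‖ ^ 2 / (rayleigh b u + (1 - eta ^ 2) * ‖w‖ ^ 2) ≤
      rayleigh b u - rayleigh b ((Real.sqrt (b (u - v) (u - v)))⁻¹ • (u - v)) := by
  have hu0 : u ≠ 0 := by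
    intro h; rw [h] at hu; simp at hu
  have hray_u : rayleigh b u = ‖u‖ ^ 2 := by
    unfold rayleigh; rw [hu, div_one]
  have hnu : 0 < ‖u‖ := norm_pos_iff.mpr hu0
  set L : ℝ := ‖u‖ ^ 2 with hL
  have hLpos : 0 < L := by positivity
  have hWpos : 0 < ‖w‖ ^ 2 := by
    have := norm_pos_iff.mpr hw0; positivity
  have h1e : 0 < 1 - eta ^ 2 := by nlinarith
  -- w is a-orthogonal to u
  have hwu : ⟪w, u⟫ = 0 := by
    have := hw u
    rw [hray_u, hu, real_inner_self_eq_norm_sq] at this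
    linarith [this, hL]
  have huw : ⟪u, w⟫ = 0 := by rw [real_inner_comm]; exact hwu
  -- u ≠ v
  have hvw2 : ‖v - w‖ ^ 2 ≤ eta ^ 2 * ‖w‖ ^ 2 := by
    have h1 : ‖v - w‖ ^ 2 ≤ (eta * ‖w‖) ^ 2 := by
      apply sq_le_sq' _ hv
      nlinarith [norm_nonneg (v - w), norm_nonneg w]
    nlinarith
  have huv0 : u - v ≠ 0 := by
    intro h
    have hveq : v = u := (sub_eq_zero.mp h).symm
    rw [hveq] at hvw2
    have hx : ‖u - w‖ ^ 2 = L + ‖w‖ ^ 2 := by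
      rw [norm_sub_sq_real, huw]; ring
    nlinarith [mul_pos h1e hWpos]
  set P : ℝ := b u v with hP
  set B : ℝ := b v v with hB
  set D : ℝ := b (u - v) (u - v) with hD
  have hDpos : 0 < D := hb_pos _ huv0
  have hBnn : 0 ≤ B := by
    rcases eq_or_ne v 0 with h | h
    · simp [hB, h]
    · exact (hb_pos v h).le
  have hDval : D = 1 - 2 * P + B := by
    simp only [hD, map_sub, LinearMap.sub_apply]
    rw [hu, hb_symm v u, ← hP, ← hB]; ring
  -- Cauchy-Schwarz: P^2 ≤ B
  have hCS : P ^ 2 ≤ B := by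
    have hz : (0:ℝ) ≤ b (v - P • u) (v - P • u) := by
      rcases eq_or_ne (v - P • u) 0 with h | h
      · simp [h]
      · exact (hb_pos _ h).le
    have hexp : b (v - P • u) (v - P • u) = B - P ^ 2 := by
      simp only [map_sub, map_smul, LinearMap.sub_apply, LinearMap.smul_apply, smul_eq_mul]
      rw [hu, hb_symm v u, ← hP, ← hB]; ring
    linarith [hexp ▸ hz]
  set s : ℝ := Real.sqrt B with hs
  have hs_nn : 0 ≤ s := Real.sqrt_nonneg B
  have hs_sq : s ^ 2 = B := Real.sq_sqrt hBnn
  have hPs : -s ≤ P := by nlinarith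
  have hDle : D ≤ 1 + 2 * s + B := by rw [hDval]; nlinarith
  -- numerator identity
  have huv_inner : ⟪u, v⟫ = ⟪w, v⟫ + L * P := by
    have h1 := hw v
    rw [hray_u, ← hP] at h1
    linarith
  set N : ℝ := 2 * ⟪w, v⟫ - ‖v‖ ^ 2 with hN
  have hNval : N = ‖w‖ ^ 2 - ‖v - w‖ ^ 2 := by
    have h2 := norm_sub_sq_real v w
    have h3 : ⟪w, v⟫ = ⟪v, w⟫ := real_inner_comm v w
    rw [hN]; linarith
  have hM : (1 - eta ^ 2) * ‖w‖ ^ 2 ≤ N := by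
    rw [hNval]; nlinarith
  have hQ : ‖u - v‖ ^ 2 = L * (D - B) - N := by
    have h4 := norm_sub_sq_real u v
    rw [hDval, hN]
    linear_combination h4 - 2 * huv_inner - hL
  -- rayleigh of scaled vector
  have hsD : 0 < Real.sqrt D := Real.sqrt_pos.mpr hDpos
  have hsD2 : Real.sqrt D ^ 2 = D := Real.sq_sqrt hDpos.le
  have hbsmul : b ((Real.sqrt D)⁻¹ • (u - v)) ((Real.sqrt D)⁻¹ • (u - v))
      = (Real.sqrt D)⁻¹ ^ 2 * D := by
    simp only [map_smul, LinearMap.smul_apply, smul_eq_mul, ← hD]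
    ring
  have hray' : rayleigh b ((Real.sqrt D)⁻¹ • (u - v)) = ‖u - v‖ ^ 2 / D := by
    unfold rayleigh
    rw [hbsmul, norm_smul, Real.norm_eq_abs, abs_inv, abs_of_pos hsD, mul_pow,
      inv_pow, hsD2]
    field_simp
  rw [hray_u, hray', hQ]
  have hden : 0 < L + (1 - eta ^ 2) * ‖w‖ ^ 2 := by positivity
  have hsub : L - (L * (D - B) - N) / D = (L * B + N) / D := by
    field_simp; ring
  rw [hsub, div_le_div_iff₀ hden hDpos]
  clear_value L P B D s N
  have hMpos : 0 < (1 - eta ^ 2) * ‖w‖ ^ 2 := mul_pos h1e hWpos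
  have key : ∀ M : ℝ, 0 < M → M ≤ N → L * M * D ≤ (L * B + N) * (L + M) := by
    intro M hM0 hMN
    have hDle' : D ≤ 1 + 2 * s + s ^ 2 := by rw [hs_sq]; exact hDle
    rw [← hs_sq]
    have f1 : L * M * D ≤ L * M * (1 + 2 * s + s ^ 2) :=
      mul_le_mul_of_nonneg_left hDle' (mul_pos hLpos hM0).le
    have f2 : L * M ≤ L * N := mul_le_mul_of_nonneg_left hMN hLpos.le
    have f3 : M * M ≤ M * N := mul_le_mul_of_nonneg_left hMN hM0.le
    have f4 : (0:ℝ) ≤ (L * s - M) ^ 2 := sq_nonneg _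
    linarith [f1, f2, f3, f4]
  have := key ((1 - eta ^ 2) * ‖w‖ ^ 2) hMpos hM
  linarith [this]
end

section
/- Under the hypotheses of the previous statement (u of norm ‖u‖₀ = 1, λ = λ(u), w the solution of a(w,χ) = a(u,χ) − λ(u,χ), ‖v − w‖ ≤ η‖w‖ with 0 ≤ η < 1, u' = (u − v)/‖u − v‖₀, λ' = λ(u')), the estimate of Lemma 3.2 is equivalent to the upper bound ‖w‖² ≤ (1/(1 − η²)) (λ/λ') (λ − λ'). -/
open scoped RealInnerProductSpace

set_option maxHeartbeats 1000000 in
/-- the estimate of Lemma 3.2 rewritten as the upper bound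
`‖w‖² ≤ (1/(1 − η²)) (λ/λ') (λ − λ')`. -/
theorem energy_norm_w_upper_bound {H : Type*} [NormedAddCommGroup H] [InnerProductSpace ℝ H] [CompleteSpace H]
    (b : LinearMap.BilinForm ℝ H)
    (hb_symm : ∀ x y : H, b x y = b y x)
    (hb_pos : ∀ x : H, x ≠ 0 → 0 < b x x)
    (lam1 : ℝ) (hlam1 : 0 < lam1)
    (hmin : ∀ x : H, x ≠ 0 → lam1 ≤ rayleigh b x)
    (u w v : H) (hu : b u u = 1)
    (hw : ∀ χ : H, ⟪w, χ⟫ = ⟪u, χ⟫ - rayleigh b u * b u χ)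
    (eta : ℝ) (heta0 : 0 ≤ eta) (heta1 : eta < 1)
    (hv : ‖v - w‖ ≤ eta * ‖w‖) :
    ‖w‖ ^ 2 ≤ 1 / (1 - eta ^ 2) * (rayleigh b u / rayleigh b ((Real.sqrt (b (u - v) (u - v)))⁻¹ • (u - v))) *
      (rayleigh b u - rayleigh b ((Real.sqrt (b (u - v) (u - v)))⁻¹ • (u - v))) := by
  have hb0 : ∀ x : H, 0 ≤ b x x := by
    intro x
    rcases eq_or_ne x 0 with h | h
    · simp [h]
    · exact (hb_pos x h).le
  have hune : u ≠ 0 := by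
    intro h; rw [h] at hu; simp at hu
  have hlam : rayleigh b u = ‖u‖ ^ 2 := by simp [rayleigh, hu]
  have hlampos : 0 < rayleigh b u := by
    rw [hlam]
    have : 0 < ‖u‖ := norm_pos_iff.mpr hune
    positivity
  have h1eta : 0 < 1 - eta ^ 2 := by nlinarith
  have hd : ‖v - w‖ ^ 2 ≤ eta ^ 2 * ‖w‖ ^ 2 := by
    have h := pow_le_pow_left₀ (norm_nonneg (v - w)) hv 2
    calc ‖v - w‖ ^ 2 ≤ (eta * ‖w‖) ^ 2 := h
      _ = eta ^ 2 * ‖w‖ ^ 2 := by ring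
  have hwu : ⟪w, u⟫ = 0 := by
    have h := hw u
    rw [real_inner_self_eq_norm_sq, hu, hlam] at h
    rw [h]; ring
  -- u - v ≠ 0
  have he_ne : u - v ≠ 0 := by
    intro h
    have hvu : u = v := by rwa [sub_eq_zero] at h
    have huw : ‖v - w‖ ^ 2 = ‖u‖ ^ 2 + ‖w‖ ^ 2 := by
      rw [← hvu, norm_sub_sq_real, real_inner_comm, hwu]; ring
    have hu0 : ‖u‖ ^ 2 ≤ 0 := by nlinarith
    have : u = 0 := by
      have := sq_nonneg ‖u‖
      have hn : ‖u‖ ^ 2 = 0 := le_antisymm hu0 this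
      have : ‖u‖ = 0 := by nlinarith [norm_nonneg u]
      exact norm_eq_zero.mp this
    exact hune this
  have hBpos : 0 < b (u - v) (u - v) := hb_pos _ he_ne
  have hEpos : 0 < ‖u - v‖ ^ 2 := by
    have : 0 < ‖u - v‖ := norm_pos_iff.mpr he_ne
    positivity
  -- scale invariance of the Rayleigh quotient
  have hsub : rayleigh b ((Real.sqrt (b (u - v) (u - v)))⁻¹ • (u - v))
      = ‖u - v‖ ^ 2 / b (u - v) (u - v) := by
    set c : ℝ := (Real.sqrt (b (u - v) (u - v)))⁻¹ with hc
    have hcpos : 0 < c := by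
      rw [hc]
      exact inv_pos.mpr (Real.sqrt_pos.mpr hBpos)
    have hcne : c ≠ 0 := ne_of_gt hcpos
    have hbne : b (u - v) (u - v) ≠ 0 := ne_of_gt hBpos
    have h1 : ‖c • (u - v)‖ ^ 2 = c ^ 2 * ‖u - v‖ ^ 2 := by
      rw [norm_smul]
      rw [Real.norm_eq_abs, mul_pow, sq_abs]
    have h2 : b (c • (u - v)) (c • (u - v)) = c ^ 2 * b (u - v) (u - v) := by
      simp [map_smul, LinearMap.smul_apply, smul_eq_mul]
      ring
    rw [rayleigh, h1, h2]
    rw [mul_div_mul_left _ _ (pow_ne_zero 2 hcne)]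
  -- abbreviations
  set lam := rayleigh b u with hlamdef
  set W := ‖w‖ ^ 2 with hW
  set D := ‖v - w‖ ^ 2 with hD
  set S := ⟪w, v - w⟫ with hS
  set c0 := b u v with hc0
  set q := b v v with hq
  set E := ‖u - v‖ ^ 2 with hE
  set B := b (u - v) (u - v) with hB
  -- Cauchy-Schwarz for b : c0^2 ≤ q
  have hCS : c0 ^ 2 ≤ q := by
    have hquad : ∀ t : ℝ, 0 ≤ q * (t * t) + (2 * c0) * t + 1 := by
      intro t
      have hexp : b (t • v + u) (t • v + u) = q * (t * t) + (2 * c0) * t + 1 := by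
        simp [map_add, map_smul, LinearMap.add_apply, LinearMap.smul_apply, smul_eq_mul, hu,
          hb_symm v u, hc0, hq]
        ring
      have := hb0 (t • v + u)
      linarith [hexp ▸ this]
    have := discrim_le_zero (a := q) (b := 2 * c0) (c := 1) hquad
    rw [discrim] at this
    nlinarith
  set s := Real.sqrt q with hs'
  have hsnn : 0 ≤ s := Real.sqrt_nonneg q
  have hsq : s ^ 2 = q := Real.sq_sqrt (hb0 v)
  have hc0s : -s ≤ c0 := by nlinarith [sq_nonneg (c0 + s)]
  -- identities
  have hA2 : ⟪w, v⟫ = ⟪u, v⟫ - lam * c0 := hw v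
  have hA7 : S = ⟪w, v⟫ - W := by
    rw [hS, inner_sub_right, real_inner_self_eq_norm_sq, hW]
  have hA6 : ‖v‖ ^ 2 = W + 2 * S + D := by
    have hv' : v = w + (v - w) := by abel
    calc ‖v‖ ^ 2 = ‖w + (v - w)‖ ^ 2 := by rw [← hv']
      _ = W + 2 * S + D := by rw [norm_add_sq_real, hW, hS, hD]
  have hA4 : E = lam - 2 * ⟪u, v⟫ + ‖v‖ ^ 2 := by
    rw [hE, norm_sub_sq_real, ← hlam]
  have hEeq : E = lam - (W - D) - 2 * lam * c0 := by
    have hP : ⟪u, v⟫ = W + S + lam * c0 := by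
      have := hA2
      have := hA7
      linarith
    rw [hA4, hP, hA6]; ring
  have hA5 : B = 1 - 2 * c0 + q := by
    rw [hB]
    simp [map_sub, LinearMap.sub_apply, hu, hb_symm v u, hc0, hq]
    ring
  -- main inequality : (1 - eta^2) * W * E ≤ lam * (lam * B - E)
  have hK : (1 - eta ^ 2) * W ≤ W - D := by linarith [hd]
  have hKnn : 0 ≤ W - D := by
    have hWnn : 0 ≤ W := by rw [hW]; positivity
    nlinarith
  have step1 : (1 - eta ^ 2) * W * E ≤ (W - D) * E :=
    mul_le_mul_of_nonneg_right hK hEpos.le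
  have hlamK : 0 ≤ lam * (W - D) := mul_nonneg hlampos.le hKnn
  have h1 : -(2 * lam * (W - D) * c0) ≤ 2 * lam * (W - D) * s := by nlinarith
  have h2 : -(W - D) ^ 2 + 2 * lam * (W - D) * s ≤ lam ^ 2 * q := by
    nlinarith [sq_nonneg ((W - D) - lam * s)]
  have step2 : (W - D) * E ≤ lam * (W - D) + lam ^ 2 * q := by
    calc (W - D) * E = lam * (W - D) - (W - D) ^ 2 - 2 * lam * (W - D) * c0 := by
          rw [hEeq]; ring
      _ ≤ lam * (W - D) + lam ^ 2 * q := by linarith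
  have step3 : lam * (W - D) + lam ^ 2 * q = lam * (lam * B - E) := by
    rw [hA5, hEeq]; ring
  have main : (1 - eta ^ 2) * W * E ≤ lam * (lam * B - E) := by
    calc (1 - eta ^ 2) * W * E ≤ (W - D) * E := step1
      _ ≤ lam * (W - D) + lam ^ 2 * q := step2
      _ = lam * (lam * B - E) := step3
  -- conclude
  rw [hsub]
  have hrhs : 1 / (1 - eta ^ 2) * (lam / (E / B)) * (lam - E / B)
      = lam * (lam * B - E) / ((1 - eta ^ 2) * E) := by
    field_simp
  rw [hrhs, le_div_iff₀ (by positivity : (0:ℝ) < (1 - eta ^ 2) * E)]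
  calc W * ((1 - eta ^ 2) * E) = (1 - eta ^ 2) * W * E := by ring
    _ ≤ lam * (lam * B - E) := main
end

section
/- Let 0 < λ₁ < λ₂ be real numbers and 0 ≤ η < 1. The function q(λ) = 1 − (1 − η²)λ(λ₂ − λ)² / (λ₂²λ + (1 − η²)(λ₂ − λ)²(λ − λ₁)) is strictly increasing on the interval λ₁ ≤ λ ≤ λ₂; its derivative there is q'(λ) = (1 − η²)(λ₂ − λ)((1 − η²)λ₁(λ₂ − λ)³ + 2λ₂²λ²) / (λ₂²λ + (1 − η²)(λ₂ − λ)²(λ − λ₁))², which is positive for λ₁ ≤ λ < λ₂. In particular q(λ₁) = 1 − (1 − η²)((λ₂ − λ₁)/λ₂)², q(λ₂) = 1, and q(λ) < 1 for λ₁ ≤ λ < λ₂. -/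
open scoped RealInnerProductSpace

/-- The convergence factor function `q(λ)` from Theorem 3.1 of the paper. -/
noncomputable def qfun (lam1 lam2 eta l : ℝ) : ℝ :=
  1 - (1 - eta ^ 2) * l * (lam2 - l) ^ 2 /
    (lam2 ^ 2 * l + (1 - eta ^ 2) * (lam2 - l) ^ 2 * (l - lam1))

/-- the convergence factor `q` is strictly increasing on `[λ₁, λ₂]`, has the stated
positive derivative on `[λ₁, λ₂)`, with `q(λ₁) = 1 − (1 − η²)((λ₂ − λ₁)/λ₂)²`, `q(λ₂) = 1` and
`q(λ) < 1` on `[λ₁, λ₂)`. -/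
theorem qfun_strictMono (lam1 lam2 eta : ℝ) (hlam1 : 0 < lam1) (hlam12 : lam1 < lam2)
    (heta0 : 0 ≤ eta) (heta1 : eta < 1) :
    StrictMonoOn (qfun lam1 lam2 eta) (Set.Icc lam1 lam2) ∧
    (∀ l ∈ Set.Ico lam1 lam2,
      HasDerivAt (qfun lam1 lam2 eta)
        ((1 - eta ^ 2) * (lam2 - l) *
            ((1 - eta ^ 2) * lam1 * (lam2 - l) ^ 3 + 2 * lam2 ^ 2 * l ^ 2) /
          (lam2 ^ 2 * l + (1 - eta ^ 2) * (lam2 - l) ^ 2 * (l - lam1)) ^ 2) l ∧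
      0 < (1 - eta ^ 2) * (lam2 - l) *
            ((1 - eta ^ 2) * lam1 * (lam2 - l) ^ 3 + 2 * lam2 ^ 2 * l ^ 2) /
          (lam2 ^ 2 * l + (1 - eta ^ 2) * (lam2 - l) ^ 2 * (l - lam1)) ^ 2) ∧
    qfun lam1 lam2 eta lam1 = 1 - (1 - eta ^ 2) * ((lam2 - lam1) / lam2) ^ 2 ∧
    qfun lam1 lam2 eta lam2 = 1 ∧
    (∀ l ∈ Set.Ico lam1 lam2, qfun lam1 lam2 eta l < 1) := by

  have hc : 0 < 1 - eta ^ 2 := by nlinarith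
  have hD : ∀ l ∈ Set.Icc lam1 lam2,
      0 < lam2 ^ 2 * l + (1 - eta ^ 2) * (lam2 - l) ^ 2 * (l - lam1) := by
    intro l hl
    obtain ⟨h1, h2⟩ := hl
    have hl2 : (0:ℝ) < lam2 := lt_trans hlam1 hlam12
    nlinarith [mul_pos (mul_pos hl2 hl2) (lt_of_lt_of_le hlam1 h1),
      mul_nonneg (mul_nonneg hc.le (sq_nonneg (lam2 - l))) (by linarith : (0:ℝ) ≤ l - lam1)]
  have hderiv : ∀ l ∈ Set.Icc lam1 lam2,
      HasDerivAt (qfun lam1 lam2 eta)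
        ((1 - eta ^ 2) * (lam2 - l) *
            ((1 - eta ^ 2) * lam1 * (lam2 - l) ^ 3 + 2 * lam2 ^ 2 * l ^ 2) /
          (lam2 ^ 2 * l + (1 - eta ^ 2) * (lam2 - l) ^ 2 * (l - lam1)) ^ 2) l := by
    intro l hl
    have hDl := hD l hl
    have hsq : HasDerivAt (fun x : ℝ => (lam2 - x) ^ 2) (2 * (lam2 - l) * (-1)) l := by
      have := (((hasDerivAt_id l).const_sub lam2).fun_pow 2)
      simpa using this
    have hN : HasDerivAt (fun x : ℝ => (1 - eta ^ 2) * x * (lam2 - x) ^ 2)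
        ((1 - eta ^ 2) * (lam2 - l) ^ 2 + ((1 - eta ^ 2) * l) * (2 * (lam2 - l) * (-1))) l := by
      have h1 : HasDerivAt (fun x : ℝ => (1 - eta ^ 2) * x) (1 - eta ^ 2) l := by
        simpa using (hasDerivAt_id l).const_mul (1 - eta ^ 2)
      simpa using h1.fun_mul hsq
    have hDen : HasDerivAt
        (fun x : ℝ => lam2 ^ 2 * x + (1 - eta ^ 2) * (lam2 - x) ^ 2 * (x - lam1))
        (lam2 ^ 2 + ((1 - eta ^ 2) * (2 * (lam2 - l) * (-1)) * (l - lam1)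
          + (1 - eta ^ 2) * (lam2 - l) ^ 2 * 1)) l := by
      have h1 : HasDerivAt (fun x : ℝ => lam2 ^ 2 * x) (lam2 ^ 2) l := by
        simpa using (hasDerivAt_id l).const_mul (lam2 ^ 2)
      have h2 : HasDerivAt (fun x : ℝ => (1 - eta ^ 2) * (lam2 - x) ^ 2 * (x - lam1))
          ((1 - eta ^ 2) * (2 * (lam2 - l) * (-1)) * (l - lam1)
            + (1 - eta ^ 2) * (lam2 - l) ^ 2 * 1) l := by
        have h3 : HasDerivAt (fun x : ℝ => (1 - eta ^ 2) * (lam2 - x) ^ 2)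
            ((1 - eta ^ 2) * (2 * (lam2 - l) * (-1))) l := hsq.const_mul _
        have h4 : HasDerivAt (fun x : ℝ => x - lam1) 1 l := by
          simpa using (hasDerivAt_id l).sub_const lam1
        simpa using h3.fun_mul h4
      exact h1.add h2
    have hq : HasDerivAt (fun x : ℝ => 1 -
        (1 - eta ^ 2) * x * (lam2 - x) ^ 2 /
          (lam2 ^ 2 * x + (1 - eta ^ 2) * (lam2 - x) ^ 2 * (x - lam1))) _ l :=
      (hasDerivAt_const l (1:ℝ)).sub (hN.div hDen hDl.ne')
    have heq : qfun lam1 lam2 eta = fun x : ℝ => 1 -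
        (1 - eta ^ 2) * x * (lam2 - x) ^ 2 /
          (lam2 ^ 2 * x + (1 - eta ^ 2) * (lam2 - x) ^ 2 * (x - lam1)) := rfl
    rw [heq]
    convert hq using 1
    field_simp
    ring
  have hpos : ∀ l ∈ Set.Ico lam1 lam2,
      0 < (1 - eta ^ 2) * (lam2 - l) *
            ((1 - eta ^ 2) * lam1 * (lam2 - l) ^ 3 + 2 * lam2 ^ 2 * l ^ 2) /
          (lam2 ^ 2 * l + (1 - eta ^ 2) * (lam2 - l) ^ 2 * (l - lam1)) ^ 2 := by
    intro l hl
    have hDl := hD l ⟨hl.1, hl.2.le⟩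
    have h1 : 0 < lam2 - l := by linarith [hl.2]
    have hl0 : 0 < l := lt_of_lt_of_le hlam1 hl.1
    apply div_pos
    · apply mul_pos (mul_pos hc h1)
      have hl2 : (0:ℝ) < lam2 := lt_trans hlam1 hlam12
      nlinarith [mul_pos (mul_pos hc hlam1) (pow_pos h1 3),
        mul_pos (mul_pos hl2 hl2) (mul_pos hl0 hl0)]
    · exact pow_pos hDl 2
  refine ⟨?_, fun l hl => ⟨hderiv l ⟨hl.1, hl.2.le⟩, hpos l hl⟩, ?_, ?_, ?_⟩
  · apply StrictMonoOn.mono (s := Set.Icc lam1 lam2) ?_ le_rfl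
    apply strictMonoOn_of_deriv_pos (convex_Icc lam1 lam2)
    · intro x hx
      exact (hderiv x hx).continuousAt.continuousWithinAt
    · intro x hx
      rw [interior_Icc] at hx
      rw [(hderiv x ⟨hx.1.le, hx.2.le⟩).deriv]
      exact hpos x ⟨hx.1.le, hx.2⟩
  · have hl2 : (0:ℝ) < lam2 := lt_trans hlam1 hlam12
    have h2 : (lam2 : ℝ) ≠ 0 := hl2.ne'
    have h1 : lam2 ^ 2 * lam1 + (1 - eta ^ 2) * (lam2 - lam1) ^ 2 * (lam1 - lam1) ≠ 0 := by
      simp only [sub_self, mul_zero, add_zero]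
      exact (mul_pos (pow_pos hl2 2) hlam1).ne'
    unfold qfun
    field_simp
    ring
  · unfold qfun
    simp [sub_self]
  · intro l hl
    have hDl := hD l ⟨hl.1, hl.2.le⟩
    have h1 : 0 < lam2 - l := by linarith [hl.2]
    have hl0 : 0 < l := lt_of_lt_of_le hlam1 hl.1
    unfold qfun
    have : 0 < (1 - eta ^ 2) * l * (lam2 - l) ^ 2 /
        (lam2 ^ 2 * l + (1 - eta ^ 2) * (lam2 - l) ^ 2 * (l - lam1)) :=
      div_pos (mul_pos (mul_pos hc hl0) (pow_pos h1 2)) hDl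
    linarith
end

section
/- (Lemma 3.3) Let 0 ≤ η < 1 and let u ∈ H with ‖u‖₀ = 1 and λ(u) < λ₂; set λ = λ(u). Let w ∈ H be the unique solution of a(w,χ) = a(u,χ) − λ(u,χ) for all χ ∈ H and let v ∈ H satisfy ‖v − w‖ ≤ η‖w‖. Then ‖v‖² ≤ ((1 + η)/(1 − η)) (λ₂/λ₁) (λ − λ₁). -/
open scoped RealInnerProductSpace

/-!
Let `K` represent `b` in the energy inner product, `⟪K x, χ⟫ = b x χ` (Riesz). Then
`w = u - λ K u`, and `‖u‖² = λ`, `b u u = 1` give `‖w‖² = λ² ‖K u‖² - λ`. Split `u = u₁ + u₂` with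
`u₁ ∈ E₁` and `u₂ ⊥ E₁`: then `K u₁ = u₁ / λ₁` and `K u₂ ⊥ E₁`, so `‖K u‖² = p / λ₁ + ‖K u₂‖²` with
`p = b u₁ u₁ = 1 - b u₂ u₂`. The bound `λ₂ ≤ λ(K u₂)` together with Cauchy–Schwarz for `b` yields
`λ₂ ‖K u₂‖² ≤ b u₂ u₂`, whence `‖w‖² ≤ λ p (λ - λ₁) / λ₁ ≤ (λ₂ / λ₁)(λ - λ₁)`. Finally
`‖v‖ ≤ (1 + η) ‖w‖` and `(1 + η)² ≤ (1 + η) / (1 - η)`.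
-/

section

variable {H : Type*} [NormedAddCommGroup H] [InnerProductSpace ℝ H]
  {b : LinearMap.BilinForm ℝ H} {c : ℝ} {K : H →L[ℝ] H}

lemma rayleigh_eq_sq_norm {u : H} (hu : b u u = 1) : rayleigh b u = ‖u‖ ^ 2 := by
  rw [rayleigh, hu, div_one]

/- `rayleigh b x = 0` whenever `b x x = 0` (division by zero), so a positive lower bound on the
Rayleigh quotient forces `b x x > 0`. -/
lemma apply_self_pos_of_le_rayleigh (hc : 0 < c) {x : H} (hx : x ≠ 0) (h : c ≤ rayleigh b x) :
    0 < b x x := by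
  have hpos : 0 < ‖x‖ ^ 2 / b x x := hc.trans_le h
  exact (div_pos_iff_of_pos_left (by positivity)).mp hpos

lemma mul_apply_self_le_of_le_rayleigh (hc : 0 < c) {x : H} (h : x ≠ 0 → c ≤ rayleigh b x) :
    c * b x x ≤ ‖x‖ ^ 2 := by
  rcases eq_or_ne x 0 with rfl | hx
  · simp
  · rw [← le_div_iff₀ (apply_self_pos_of_le_rayleigh hc hx (h hx))]
    exact h hx

lemma apply_self_nonneg_of_le_rayleigh (hc : 0 < c) (h : ∀ x : H, x ≠ 0 → c ≤ rayleigh b x)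
    (x : H) : 0 ≤ b x x := by
  rcases eq_or_ne x 0 with rfl | hx
  · simp
  · exact (apply_self_pos_of_le_rayleigh hc hx (h x hx)).le

lemma abs_apply_le_of_le_rayleigh (hb : b.IsSymm) (hc : 0 < c)
    (h : ∀ x : H, x ≠ 0 → c ≤ rayleigh b x) (x y : H) : |b x y| ≤ c⁻¹ * ‖x‖ * ‖y‖ := by
  have hnonneg := apply_self_nonneg_of_le_rayleigh hc h
  have hx := mul_apply_self_le_of_le_rayleigh hc (h x)
  have hy := mul_apply_self_le_of_le_rayleigh hc (h y)
  refine abs_le_of_sq_le_sq ?_ (by positivity)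
  calc b x y ^ 2 ≤ b x x * b y y :=
        b.apply_sq_le_of_symm hnonneg (LinearMap.BilinForm.isSymm_iff.mp hb) x y
    _ ≤ (c⁻¹ * ‖x‖ ^ 2) * (c⁻¹ * ‖y‖ ^ 2) :=
        mul_le_mul ((le_inv_mul_iff₀ hc).mpr hx) ((le_inv_mul_iff₀ hc).mpr hy) (hnonneg y)
          (by positivity)
    _ = (c⁻¹ * ‖x‖ * ‖y‖) ^ 2 := by ring

lemma exists_inner_apply_eq_of_bound [CompleteSpace H] {C : ℝ}
    (hC : ∀ x y : H, |b x y| ≤ C * ‖x‖ * ‖y‖) :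
    ∃ K : H →L[ℝ] H, ∀ x y, ⟪K x, y⟫ = b x y :=
  ⟨InnerProductSpace.continuousLinearMapOfBilin (𝕜 := ℝ) (b.mkContinuous₂ C hC),
    InnerProductSpace.continuousLinearMapOfBilin_apply _⟩

noncomputable def eigenSubmodule (b : LinearMap.BilinForm ℝ H) (c : ℝ) : Submodule ℝ H :=
  LinearMap.ker (innerₗ H - c • b)

lemma mem_eigenSubmodule {x : H} : x ∈ eigenSubmodule b c ↔ ∀ χ, ⟪x, χ⟫ = c * b x χ := by
  simp [eigenSubmodule, LinearMap.ext_iff, sub_eq_zero]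

lemma apply_eq_inner_div_of_mem_eigenSubmodule (hb : b.IsSymm) (hc : c ≠ 0) {χ₁ : H}
    (hχ₁ : χ₁ ∈ eigenSubmodule b c) (x : H) : b x χ₁ = ⟪χ₁, x⟫ / c := by
  rw [mem_eigenSubmodule.mp hχ₁ x, hb.eq, mul_div_cancel_left₀ _ hc]

lemma apply_eq_zero_of_mem_orthogonal (hb : b.IsSymm) (hc : c ≠ 0) {x χ₁ : H}
    (hx : x ∈ (eigenSubmodule b c)ᗮ) (hχ₁ : χ₁ ∈ eigenSubmodule b c) : b x χ₁ = 0 := by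
  rw [apply_eq_inner_div_of_mem_eigenSubmodule hb hc hχ₁,
    Submodule.inner_right_of_mem_orthogonal hχ₁ hx, zero_div]

lemma isClosed_eigenSubmodule (hK : ∀ x y, ⟪K x, y⟫ = b x y) :
    IsClosed (eigenSubmodule b c : Set H) := by
  have h : (eigenSubmodule b c : Set H) = ⋂ χ, {x | ⟪x, χ⟫ = c * ⟪K x, χ⟫} := by
    ext x
    simp [mem_eigenSubmodule, hK]
  rw [h]
  exact isClosed_iInter fun χ => isClosed_eq (by fun_prop) (by fun_prop)

lemma exists_add_mem_eigenSubmodule_mem_orthogonal [CompleteSpace H]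
    (hK : ∀ x y, ⟪K x, y⟫ = b x y) (u : H) :
    ∃ u₁ ∈ eigenSubmodule b c, ∃ u₂ ∈ (eigenSubmodule b c)ᗮ, u = u₁ + u₂ := by
  have : CompleteSpace (eigenSubmodule b c) := (isClosed_eigenSubmodule hK).completeSpace_coe
  exact Submodule.exists_add_mem_mem_orthogonal u

lemma apply_eq_inv_smul_of_mem_eigenSubmodule (hK : ∀ x y, ⟪K x, y⟫ = b x y) (hc : c ≠ 0)
    {x : H} (hx : x ∈ eigenSubmodule b c) : K x = c⁻¹ • x :=
  ext_inner_right ℝ fun χ => by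
    rw [hK, real_inner_smul_left, mem_eigenSubmodule.mp hx χ, inv_mul_cancel_left₀ hc]

lemma apply_mem_orthogonal (hK : ∀ x y, ⟪K x, y⟫ = b x y) (hb : b.IsSymm) (hc : c ≠ 0) {y : H}
    (hy : y ∈ (eigenSubmodule b c)ᗮ) : K y ∈ (eigenSubmodule b c)ᗮ :=
  (Submodule.mem_orthogonal _ _).mpr fun χ₁ hχ₁ => by
    rw [real_inner_comm, hK, apply_eq_zero_of_mem_orthogonal hb hc hy hχ₁]

lemma mul_sq_norm_apply_le (hK : ∀ x y, ⟪K x, y⟫ = b x y) (hb : b.IsSymm)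
    (hnonneg : ∀ x, 0 ≤ b x x) {μ : ℝ} (hμ : 0 < μ) {y : H}
    (h : μ * b (K y) (K y) ≤ ‖K y‖ ^ 2) : μ * ‖K y‖ ^ 2 ≤ b y y := by
  have hnorm : ‖K y‖ ^ 2 = b y (K y) := by rw [← real_inner_self_eq_norm_sq, hK]
  have hcs := b.apply_sq_le_of_symm hnonneg (LinearMap.BilinForm.isSymm_iff.mp hb) y (K y)
  rw [← hnorm] at hcs
  have hmul : ‖K y‖ ^ 2 * (μ * ‖K y‖ ^ 2) ≤ ‖K y‖ ^ 2 * b y y := by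
    nlinarith [mul_le_mul_of_nonneg_left h (hnonneg y)]
  rcases (sq_nonneg ‖K y‖).eq_or_lt with hzero | hpos
  · rw [← hzero, mul_zero]
    exact hnonneg y
  · exact le_of_mul_le_mul_left hmul hpos

lemma apply_add_self_of_mem_eigenSubmodule (hb : b.IsSymm) (hc : c ≠ 0) {u₁ u₂ : H}
    (hu₁ : u₁ ∈ eigenSubmodule b c) (hu₂ : u₂ ∈ (eigenSubmodule b c)ᗮ) :
    b (u₁ + u₂) (u₁ + u₂) = b u₁ u₁ + b u₂ u₂ := by
  have h₂₁ : b u₂ u₁ = 0 := apply_eq_zero_of_mem_orthogonal hb hc hu₂ hu₁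
  simp only [map_add, LinearMap.add_apply, h₂₁, hb.eq u₁ u₂]
  ring

lemma sq_norm_apply_add_of_mem_eigenSubmodule (hK : ∀ x y, ⟪K x, y⟫ = b x y) (hb : b.IsSymm)
    (hc : c ≠ 0) {u₁ u₂ : H} (hu₁ : u₁ ∈ eigenSubmodule b c)
    (hu₂ : u₂ ∈ (eigenSubmodule b c)ᗮ) : ‖K (u₁ + u₂)‖ ^ 2 = b u₁ u₁ / c + ‖K u₂‖ ^ 2 := by
  have hnorm₁ : ‖u₁‖ ^ 2 = c * b u₁ u₁ := by
    rw [← real_inner_self_eq_norm_sq]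
    exact mem_eigenSubmodule.mp hu₁ u₁
  rw [map_add, apply_eq_inv_smul_of_mem_eigenSubmodule hK hc hu₁, norm_add_sq_real,
    real_inner_smul_left,
    Submodule.inner_right_of_mem_orthogonal hu₁ (apply_mem_orthogonal hK hb hc hu₂), norm_smul,
    mul_pow, hnorm₁, Real.norm_eq_abs, sq_abs]
  field_simp
  ring

lemma sq_norm_sub_smul_apply (hK : ∀ x y, ⟪K x, y⟫ = b x y) (t : ℝ) (u : H) :
    ‖u - t • K u‖ ^ 2 = ‖u‖ ^ 2 - 2 * t * b u u + t ^ 2 * ‖K u‖ ^ 2 := by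
  rw [norm_sub_sq_real, real_inner_smul_right, real_inner_comm, hK, norm_smul, mul_pow,
    Real.norm_eq_abs, sq_abs]
  ring

theorem sq_norm_sub_rayleigh_smul_apply_le [CompleteSpace H] (hK : ∀ x y, ⟪K x, y⟫ = b x y)
    (hb : b.IsSymm) (hc : 0 < c) (hmin : ∀ x : H, x ≠ 0 → c ≤ rayleigh b x) {μ : ℝ}
    (hmin₂ : ∀ x : H, x ≠ 0 → (∀ χ₁ ∈ eigenSubmodule b c, b x χ₁ = 0) → μ ≤ rayleigh b x)
    {u : H} (hu : b u u = 1) (hμ : rayleigh b u ≤ μ) :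
    ‖u - rayleigh b u • K u‖ ^ 2 ≤ μ / c * (rayleigh b u - c) := by
  have hcu : c ≤ rayleigh b u := hmin u (by rintro rfl; simp at hu)
  have hμpos : 0 < μ := hc.trans_le (hcu.trans hμ)
  have hnonneg := apply_self_nonneg_of_le_rayleigh hc hmin
  rw [sq_norm_sub_smul_apply hK, hu, ← rayleigh_eq_sq_norm hu]
  obtain ⟨u₁, hu₁, u₂, hu₂, rfl⟩ := exists_add_mem_eigenSubmodule_mem_orthogonal hK u
  rw [apply_add_self_of_mem_eigenSubmodule hb hc.ne' hu₁ hu₂] at hu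
  have hKu₂ := apply_mem_orthogonal hK hb hc.ne' hu₂
  have hbound₂ : μ * ‖K u₂‖ ^ 2 ≤ b u₂ u₂ :=
    mul_sq_norm_apply_le hK hb hnonneg hμpos <| mul_apply_self_le_of_le_rayleigh hμpos fun h =>
      hmin₂ _ h fun _ hχ₁ => apply_eq_zero_of_mem_orthogonal hb hc.ne' hKu₂ hχ₁
  rw [sq_norm_apply_add_of_mem_eigenSubmodule hK hb hc.ne' hu₁ hu₂]
  set lam := rayleigh b (u₁ + u₂)
  have hlam : 0 ≤ lam := hc.le.trans hcu
  calc lam - 2 * lam * 1 + lam ^ 2 * (b u₁ u₁ / c + ‖K u₂‖ ^ 2)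
      = lam ^ 2 * b u₁ u₁ / c + lam * (lam * ‖K u₂‖ ^ 2) - lam := by ring
    _ ≤ lam ^ 2 * b u₁ u₁ / c + lam * b u₂ u₂ - lam := by
        gcongr
        exact (mul_le_mul_of_nonneg_right hμ (sq_nonneg _)).trans hbound₂
    _ = b u₁ u₁ * lam / c * (lam - c) := by
        rw [eq_sub_of_add_eq' hu]
        field_simp
        ring
    _ ≤ μ / c * (lam - c) := by
        have hp : b u₁ u₁ ≤ 1 := by linarith [hnonneg u₂]
        gcongr
        exact (mul_le_of_le_one_left hlam hp).trans hμ

lemma sq_norm_le_of_norm_sub_le {E : Type*} [SeminormedAddCommGroup E] {v w : E} {η : ℝ}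
    (hη₀ : 0 ≤ η) (hη₁ : η < 1) (hv : ‖v - w‖ ≤ η * ‖w‖) :
    ‖v‖ ^ 2 ≤ (1 + η) / (1 - η) * ‖w‖ ^ 2 := by
  have hnorm : ‖v‖ ≤ (1 + η) * ‖w‖ := by linarith [norm_sub_norm_le v w]
  have hfactor : (1 + η) ^ 2 ≤ (1 + η) / (1 - η) := by
    rw [le_div_iff₀ (by linarith)]
    nlinarith [mul_nonneg (sq_nonneg η) (by linarith : (0 : ℝ) ≤ 1 + η)]
  calc ‖v‖ ^ 2 ≤ ((1 + η) * ‖w‖) ^ 2 := pow_le_pow_left₀ (norm_nonneg v) hnorm 2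
    _ = (1 + η) ^ 2 * ‖w‖ ^ 2 := mul_pow _ _ _
    _ ≤ (1 + η) / (1 - η) * ‖w‖ ^ 2 := by gcongr

end

theorem energy_norm_v_bound_general {H : Type*} [NormedAddCommGroup H] [InnerProductSpace ℝ H] [CompleteSpace H]
    (b : LinearMap.BilinForm ℝ H)
    (hb_symm : ∀ x y : H, b x y = b y x)
    (lam1 : ℝ) (hlam1 : 0 < lam1)
    (hmin : ∀ x : H, x ≠ 0 → lam1 ≤ rayleigh b x)
    (lam2 : ℝ)
    (hmin2 : ∀ x : H, x ≠ 0 →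
      (∀ χ₁ : H, (∀ χ : H, ⟪χ₁, χ⟫ = lam1 * b χ₁ χ) → b x χ₁ = 0) →
      lam2 ≤ rayleigh b x)
    (eta : ℝ) (heta0 : 0 ≤ eta) (heta1 : eta < 1)
    (u w v : H) (hu : b u u = 1) (hlt : rayleigh b u < lam2)
    (hw : ∀ χ : H, ⟪w, χ⟫ = ⟪u, χ⟫ - rayleigh b u * b u χ)
    (hv : ‖v - w‖ ≤ eta * ‖w‖) :
    ‖v‖ ^ 2 ≤ (1 + eta) / (1 - eta) * (lam2 / lam1) * (rayleigh b u - lam1) := by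
  have hb : b.IsSymm := LinearMap.BilinForm.isSymm_def.mpr hb_symm
  obtain ⟨K, hK⟩ := exists_inner_apply_eq_of_bound (abs_apply_le_of_le_rayleigh hb hlam1 hmin)
  have hwK : w = u - rayleigh b u • K u :=
    ext_inner_right ℝ fun χ => by rw [hw, inner_sub_left, real_inner_smul_left, hK]
  have hmin₂ (x : H) (hx : x ≠ 0) (h : ∀ χ₁ ∈ eigenSubmodule b lam1, b x χ₁ = 0) :
      lam2 ≤ rayleigh b x :=
    hmin2 x hx fun χ₁ hχ₁ => h χ₁ (mem_eigenSubmodule.mpr hχ₁)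
  have hw_sq : ‖w‖ ^ 2 ≤ lam2 / lam1 * (rayleigh b u - lam1) :=
    hwK ▸ sq_norm_sub_rayleigh_smul_apply_le hK hb hlam1 hmin hmin₂ hu hlt.le
  calc ‖v‖ ^ 2 ≤ (1 + eta) / (1 - eta) * ‖w‖ ^ 2 := sq_norm_le_of_norm_sub_le heta0 heta1 hv
    _ ≤ (1 + eta) / (1 - eta) * (lam2 / lam1 * (rayleigh b u - lam1)) :=
        mul_le_mul_of_nonneg_left hw_sq (div_nonneg (by linarith) (by linarith))
    _ = (1 + eta) / (1 - eta) * (lam2 / lam1) * (rayleigh b u - lam1) := by ring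

/-- Lemma 3.3: `‖v‖² ≤ ((1 + η)/(1 − η)) (λ₂/λ₁) (λ − λ₁)`. -/
theorem energy_norm_v_bound {H : Type*} [NormedAddCommGroup H] [InnerProductSpace ℝ H] [CompleteSpace H]
    (b : LinearMap.BilinForm ℝ H)
    (hb_symm : ∀ x y : H, b x y = b y x)
    (hb_pos : ∀ x : H, x ≠ 0 → 0 < b x x)
    (lam1 : ℝ) (hlam1 : 0 < lam1)
    (hmin : ∀ x : H, x ≠ 0 → lam1 ≤ rayleigh b x)
    (hE1 : ∃ x : H, x ≠ 0 ∧ ∀ χ : H, ⟪ x, χ⟫ = lam1 * b x χ)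
    (lam2 : ℝ) (hlam12 : lam1 < lam2)
    (hmin2 : ∀ x : H, x ≠ 0 →
      (∀ χ₁ : H, (∀ χ : H, ⟪χ₁, χ⟫ = lam1 * b χ₁ χ) → b x χ₁ = 0) →
      lam2 ≤ rayleigh b x)
    (eta : ℝ) (heta0 : 0 ≤ eta) (heta1 : eta < 1)
    (u w v : H) (hu : b u u = 1) (hlt : rayleigh b u < lam2)
    (hw : ∀ χ : H, ⟪w, χ⟫ = ⟪u, χ⟫ - rayleigh b u * b u χ)
    (hv : ‖v - w‖ ≤ eta * ‖w‖) :
    ‖v‖ ^ 2 ≤ (1 + eta) / (1 - eta) * (lam2 / lam1) * (rayleigh b u - lam1) :=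
  energy_norm_v_bound_general b hb_symm lam1 hlam1 hmin lam2 hmin2 eta heta0 heta1 u w v hu hlt hw
    hv
end

section
/- Let u ∈ H with ‖u‖₀ = 1 and λ(u) ≤ λ₂, and let v ∈ H with u − v ≠ 0 satisfy ‖v‖² ≤ λ₁/4 in the energy norm. Set u' = (u − v)/‖u − v‖₀. Then ‖u − u'‖ ≤ 2(1 + (λ₂/λ₁)^{1/2})‖v‖. -/
/-! Write `s = ‖u - v‖₀` and `t = ‖v‖₀`. The triangle inequality for `‖·‖₀` gives `|s - 1| ≤ t`,
and `λ₁ ‖·‖₀² ≤ ‖·‖²` gives `t ≤ ‖v‖ / √λ₁ ≤ 1/2`, hence `|1 - s⁻¹| ≤ 2t`. Since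
`u - u' = v + (1 - s⁻¹)(u - v)` and `‖u - v‖ ≤ ‖u‖ + ‖v‖ ≤ √λ₂ + ‖v‖`, we get
`‖u - u'‖ ≤ ‖v‖ + 2t√λ₂ + 2t‖v‖ ≤ 2(1 + √(λ₂/λ₁))‖v‖`. -/

open scoped RealInnerProductSpace

namespace LinearMap.BilinForm

variable {M : Type*} [AddCommGroup M] [Module ℝ M] {B : LinearMap.BilinForm ℝ M}

/-- Cauchy–Schwarz for the symmetrization `B + B.flip`, whose diagonal is twice that of `B`. -/
lemma sqrt_apply_add_le (hB : ∀ x, 0 ≤ B x x) (x y : M) :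
    √(B (x + y) (x + y)) ≤ √(B x x) + √(B y y) := by
  have hcs := apply_mul_apply_le_of_forall_zero_le (B + B.flip)
    (fun z ↦ by simpa using add_nonneg (hB z) (hB z)) x y
  simp only [LinearMap.add_apply, flip_apply] at hcs
  have hcross : (B x y + B y x) / 2 ≤ √(B x x) * √(B y y) := by
    rw [← Real.sqrt_mul (hB x)]
    exact (le_abs_self _).trans (Real.abs_le_sqrt (by nlinarith))
  rw [Real.sqrt_le_left (by positivity)]
  simp only [map_add, LinearMap.add_apply]
  nlinarith [Real.sq_sqrt (hB x), Real.sq_sqrt (hB y)]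

lemma abs_sqrt_apply_sub_sub_le (hB : ∀ x, 0 ≤ B x x) (x y : M) :
    |√(B (x - y) (x - y)) - √(B x x)| ≤ √(B y y) := by
  have hle := sqrt_apply_add_le hB x (-y)
  have hge := sqrt_apply_add_le hB (x - y) y
  simp only [map_neg, LinearMap.neg_apply, neg_neg, ← sub_eq_add_neg, sub_add_cancel] at hle hge
  rw [abs_sub_le_iff]
  constructor <;> linarith

end LinearMap.BilinForm

lemma norm_sub_smul_le {E : Type*} [SeminormedAddCommGroup E] [NormedSpace ℝ E] (x w : E) (c : ℝ) :
    ‖x - c • w‖ ≤ ‖x - w‖ + |1 - c| * ‖w‖ :=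
  calc ‖x - c • w‖ = ‖(x - w) + (1 - c) • w‖ := by rw [sub_smul, one_smul]; abel_nf
    _ ≤ ‖x - w‖ + |1 - c| * ‖w‖ := by grw [norm_add_le, norm_smul, Real.norm_eq_abs]

lemma abs_one_sub_inv_le {s t : ℝ} (hst : |s - 1| ≤ t) (ht : t ≤ 1 / 2) :
    |1 - s⁻¹| ≤ 2 * t := by
  have hs : 1 / 2 ≤ s := by linarith [neg_abs_le (s - 1)]
  rw [show 1 - s⁻¹ = (s - 1) / s by field_simp, abs_div, abs_of_pos (a := s) (by linarith),
    div_le_iff₀ (by linarith)]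
  nlinarith [abs_nonneg (s - 1)]

lemma sqrt_mul_sqrt_le_norm_of_le_rayleigh {H : Type*} [NormedAddCommGroup H]
    [InnerProductSpace ℝ H] {b : LinearMap.BilinForm ℝ H} (hb_pos : ∀ x : H, x ≠ 0 → 0 < b x x)
    {lam : ℝ} (hmin : ∀ x : H, x ≠ 0 → lam ≤ rayleigh b x) (x : H) :
    √lam * √(b x x) ≤ ‖x‖ := by
  rcases eq_or_ne x 0 with rfl | hx
  · simp
  rw [← Real.sqrt_mul' _ (hb_pos x hx).le, ← Real.sqrt_sq (norm_nonneg x)]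
  exact Real.sqrt_le_sqrt ((le_div_iff₀ (hb_pos x hx)).1 (hmin x hx))

theorem iterate_distance_bound_general {H : Type*} [NormedAddCommGroup H] [InnerProductSpace ℝ H]
    (b : LinearMap.BilinForm ℝ H)
    (hb_pos : ∀ x : H, x ≠ 0 → 0 < b x x)
    (lam1 : ℝ) (hlam1 : 0 < lam1)
    (hmin : ∀ x : H, x ≠ 0 → lam1 ≤ rayleigh b x)
    (lam2 : ℝ)
    (u v : H) (hu : b u u = 1) (hle : rayleigh b u ≤ lam2)
    (hv : ‖v‖ ^ 2 ≤ lam1 / 4) :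
    ‖u - (Real.sqrt (b (u - v) (u - v)))⁻¹ • (u - v)‖ ≤ 2 * (1 + Real.sqrt (lam2 / lam1)) * ‖v‖ := by
  have hb_nonneg (x : H) : 0 ≤ b x x := by
    rcases eq_or_ne x 0 with rfl | hx
    · simp
    · exact (hb_pos x hx).le
  set t := √(b v v)
  have hsqrt1 : 0 < √lam1 := Real.sqrt_pos.2 hlam1
  have ht_norm : t ≤ ‖v‖ / √lam1 := by
    rw [le_div_iff₀ hsqrt1, mul_comm]
    exact sqrt_mul_sqrt_le_norm_of_le_rayleigh hb_pos hmin v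
  have ht_half : t ≤ 1 / 2 := by
    have hv' : ‖v‖ ≤ √lam1 / 2 := by nlinarith [Real.sq_sqrt hlam1.le, norm_nonneg v]
    calc t ≤ ‖v‖ / √lam1 := ht_norm
      _ ≤ 1 / 2 := by rw [div_le_iff₀ hsqrt1]; linarith
  have hs : |√(b (u - v) (u - v)) - 1| ≤ t := by
    simpa [hu] using b.abs_sqrt_apply_sub_sub_le hb_nonneg u v
  have hu_norm : ‖u‖ ≤ √lam2 := by
    rw [rayleigh, hu, div_one] at hle
    simpa using Real.abs_le_sqrt hle
  calc ‖u - (√(b (u - v) (u - v)))⁻¹ • (u - v)‖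
      ≤ ‖u - (u - v)‖ + |1 - (√(b (u - v) (u - v)))⁻¹| * ‖u - v‖ := norm_sub_smul_le _ _ _
    _ ≤ ‖v‖ + 2 * t * (√lam2 + ‖v‖) := by
      grw [sub_sub_cancel, abs_one_sub_inv_le hs ht_half, norm_sub_le, hu_norm]
    _ ≤ ‖v‖ + 2 * (‖v‖ / √lam1) * √lam2 + 2 * (1 / 2) * ‖v‖ := by
      rw [mul_add, ← add_assoc]; gcongr
    _ = 2 * (1 + √(lam2 / lam1)) * ‖v‖ := by
      rw [Real.sqrt_div' _ hlam1.le]; ring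

/-- if `‖v‖² ≤ λ₁/4` then `‖u − u'‖ ≤ 2(1 + √(λ₂/λ₁))‖v‖`. -/
theorem iterate_distance_bound {H : Type*} [NormedAddCommGroup H] [InnerProductSpace ℝ H] [CompleteSpace H]
    (b : LinearMap.BilinForm ℝ H)
    (hb_symm : ∀ x y : H, b x y = b y x)
    (hb_pos : ∀ x : H, x ≠ 0 → 0 < b x x)
    (lam1 : ℝ) (hlam1 : 0 < lam1)
    (hmin : ∀ x : H, x ≠ 0 → lam1 ≤ rayleigh b x)
    (lam2 : ℝ) (hlam12 : lam1 < lam2)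
    (u v : H) (hu : b u u = 1) (hle : rayleigh b u ≤ lam2)
    (huv : u - v ≠ 0) (hv : ‖v‖ ^ 2 ≤ lam1 / 4) :
    ‖u - (Real.sqrt (b (u - v) (u - v)))⁻¹ • (u - v)‖ ≤ 2 * (1 + Real.sqrt (lam2 / lam1)) * ‖v‖ :=
  iterate_distance_bound_general b hb_pos lam1 hlam1 hmin lam2 u v hu hle hv
end

section
/- (Lemma 3.4) Let 0 ≤ η < 1 and let u ∈ H with ‖u‖₀ = 1 and λ(u) < λ₂. Let w ∈ H be the unique solution of a(w,χ) = a(u,χ) − λ(u)(u,χ) for all χ ∈ H, let v ∈ H satisfy ‖v − w‖ ≤ η‖w‖ and additionally ‖v‖² ≤ λ₁/4, and set u' = (u − v)/‖u − v‖₀. Then ‖u − u'‖² ≤ c(λ(u) − λ₁) with the explicit constant c = 4(1 + (λ₂/λ₁)^{1/2})² ((1 + η)/(1 − η))(λ₂/λ₁), which depends only on η and the ratio λ₂/λ₁. -/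
open scoped RealInnerProductSpace

section Aux

variable {H : Type*} [NormedAddCommGroup H] [InnerProductSpace ℝ H]

lemma bilin_nonneg (b : LinearMap.BilinForm ℝ H) (hb_pos : ∀ x : H, x ≠ 0 → 0 < b x x) (x : H) :
    0 ≤ b x x := by
  rcases eq_or_ne x 0 with rfl | h
  · simp
  · exact (hb_pos x h).le

lemma bilin_cs (b : LinearMap.BilinForm ℝ H) (hb_symm : ∀ x y : H, b x y = b y x)
    (hb_pos : ∀ x : H, x ≠ 0 → 0 < b x x) (x y : H) :
    (b x y) ^ 2 ≤ b x x * b y y := by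
  rcases eq_or_ne y 0 with rfl | hy
  · simp
  · have hyy : 0 < b y y := hb_pos y hy
    set t : ℝ := b x y / b y y with ht_def
    have h := bilin_nonneg b hb_pos (x - t • y)
    have hexp : b (x - t • y) (x - t • y)
        = b x x - 2 * t * b x y + t ^ 2 * b y y := by
      simp only [map_sub, map_smul, LinearMap.sub_apply, LinearMap.smul_apply, smul_eq_mul]
      rw [hb_symm y x]
      ring
    rw [hexp] at h
    have ht : t * b y y = b x y := div_mul_cancel₀ _ hyy.ne'
    nlinarith [mul_nonneg h hyy.le, ht, sq_nonneg (t * b y y - b x y)]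

/-- The eigenspace `E₁` as a submodule. -/
def eigsp (b : LinearMap.BilinForm ℝ H) (lam1 : ℝ) : Submodule ℝ H where
  carrier := {x : H | ∀ χ : H, ⟪x, χ⟫ = lam1 * b x χ}
  add_mem' := by
    intro a c ha hc χ
    simp only [Set.mem_setOf_eq] at ha hc
    simp only [map_add, LinearMap.add_apply, inner_add_left, ha χ, hc χ]
    ring
  zero_mem' := by intro χ; simp
  smul_mem' := by
    intro r a ha χ
    simp only [Set.mem_setOf_eq] at ha
    simp only [map_smul, LinearMap.smul_apply, smul_eq_mul, real_inner_smul_left, ha χ]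
    ring

set_option maxHeartbeats 1600000

lemma mem_eigsp {b : LinearMap.BilinForm ℝ H} {lam1 : ℝ} {x : H} :
    x ∈ eigsp b lam1 ↔ ∀ χ : H, ⟪x, χ⟫ = lam1 * b x χ := Iff.rfl

end Aux

/-- Lemma 3.4: `‖u − u'‖² ≤ c(λ(u) − λ₁)` with the explicit constant
`c = 4(1 + √(λ₂/λ₁))²((1 + η)/(1 − η))(λ₂/λ₁)`. -/
theorem iterate_distance_squared_bound {H : Type*} [NormedAddCommGroup H] [InnerProductSpace ℝ H] [CompleteSpace H]
    (b : LinearMap.BilinForm ℝ H)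
    (hb_symm : ∀ x y : H, b x y = b y x)
    (hb_pos : ∀ x : H, x ≠ 0 → 0 < b x x)
    (lam1 : ℝ) (hlam1 : 0 < lam1)
    (hmin : ∀ x : H, x ≠ 0 → lam1 ≤ rayleigh b x)
    (hE1 : ∃ x : H, x ≠ 0 ∧ ∀ χ : H, ⟪ x, χ⟫ = lam1 * b x χ)
    (lam2 : ℝ) (hlam12 : lam1 < lam2)
    (hmin2 : ∀ x : H, x ≠ 0 →
      (∀ χ₁ : H, (∀ χ : H, ⟪χ₁, χ⟫ = lam1 * b χ₁ χ) → b x χ₁ = 0) →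
      lam2 ≤ rayleigh b x)
    (eta : ℝ) (heta0 : 0 ≤ eta) (heta1 : eta < 1)
    (u w v : H) (hu : b u u = 1) (hlt : rayleigh b u < lam2)
    (hw : ∀ χ : H, ⟪w, χ⟫ = ⟪u, χ⟫ - rayleigh b u * b u χ)
    (hv : ‖v - w‖ ≤ eta * ‖w‖) (hv2 : ‖v‖ ^ 2 ≤ lam1 / 4) :
    ‖u - (Real.sqrt (b (u - v) (u - v)))⁻¹ • (u - v)‖ ^ 2 ≤
      4 * (1 + Real.sqrt (lam2 / lam1)) ^ 2 * ((1 + eta) / (1 - eta)) * (lam2 / lam1) *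
        (rayleigh b u - lam1) := by
  have hbnn : ∀ x : H, 0 ≤ b x x := bilin_nonneg b hb_pos
  have hbcs : ∀ x y : H, (b x y) ^ 2 ≤ b x x * b y y := bilin_cs b hb_symm hb_pos
  have hune : u ≠ 0 := by
    intro h
    rw [h] at hu
    simp at hu
  set lam := rayleigh b u with hlam_def
  have hlam_eq : lam = ‖u‖ ^ 2 := by rw [hlam_def, rayleigh, hu, div_one]
  have hlam1le : lam1 ≤ lam := hmin u hune
  have hlam0 : 0 < lam := lt_of_lt_of_le hlam1 hlam1le
  have hlam2pos : 0 < lam2 := lt_trans hlam1 hlam12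
  clear_value lam
  have hbbound : ∀ x : H, lam1 * b x x ≤ ‖x‖ ^ 2 := by
    intro x
    rcases eq_or_ne x 0 with rfl | hx
    · simp
    · have h1 := hmin x hx
      rw [rayleigh] at h1
      have h2 := hb_pos x hx
      calc lam1 * b x x ≤ (‖x‖ ^ 2 / b x x) * b x x :=
            mul_le_mul_of_nonneg_right h1 h2.le
        _ = ‖x‖ ^ 2 := by field_simp
  -- continuity of `x ↦ b x χ`
  have hbcont : ∀ χ : H, Continuous fun x : H => b x χ := by
    intro χ
    have hb' : ∀ x : H, ‖(b.flip χ) x‖ ≤ (‖χ‖ / lam1) * ‖x‖ := by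
      intro x
      have h1 : (b x χ) ^ 2 ≤ b x x * b χ χ := hbcs x χ
      have h2 := hbbound x
      have h3 := hbbound χ
      have key : (b x χ) ^ 2 * lam1 ^ 2 ≤ ‖x‖ ^ 2 * ‖χ‖ ^ 2 := by
        have hM := mul_le_mul h2 h3 (mul_nonneg hlam1.le (hbnn χ)) (sq_nonneg ‖x‖)
        have hh := mul_le_mul_of_nonneg_right h1 (sq_nonneg lam1)
        nlinarith only [hM, hh]
      have hsq : (b x χ) ^ 2 ≤ (‖χ‖ / lam1 * ‖x‖) ^ 2 := by
        rw [div_mul_eq_mul_div, div_pow, le_div_iff₀ (by positivity)]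
        nlinarith only [key]
      have habs : |b x χ| ≤ ‖χ‖ / lam1 * ‖x‖ := by
        rw [abs_le]
        constructor <;>
          nlinarith only [hsq, mul_nonneg (div_nonneg (norm_nonneg χ) hlam1.le) (norm_nonneg x)]
      simpa [LinearMap.flip_apply, Real.norm_eq_abs] using habs
    have hcont := (LinearMap.mkContinuous (b.flip χ) (‖χ‖ / lam1) hb').continuous
    have heq : (fun x : H => b x χ) = ⇑(LinearMap.mkContinuous (b.flip χ) (‖χ‖ / lam1) hb') := by
      ext x
      simp [LinearMap.mkContinuous_apply, LinearMap.flip_apply]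
    rw [heq]
    exact hcont
  set K : Submodule ℝ H := eigsp b lam1 with hKdef
  have hKclosed : IsClosed (K : Set H) := by
    have hset : (K : Set H) = ⋂ χ : H, {x : H | ⟪x, χ⟫ = lam1 * b x χ} := by
      ext x
      simp only [Set.mem_iInter, Set.mem_setOf_eq, SetLike.mem_coe]
      exact mem_eigsp
    rw [hset]
    refine isClosed_iInter fun χ => isClosed_eq ?_ ?_
    · exact Continuous.inner continuous_id continuous_const
    · exact continuous_const.mul (hbcont χ)
  haveI : CompleteSpace K := hKclosed.completeSpace_coe
  set u1 : H := (K.orthogonalProjectionOnto u : H) with hu1def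
  set u2 : H := u - u1 with hu2def
  have hu1K : u1 ∈ K := SetLike.coe_mem _
  have hu2o : u2 ∈ Kᗮ := Submodule.sub_starProjection_mem_orthogonal (K := K) u
  set w1 : H := (K.orthogonalProjectionOnto w : H) with hw1def
  set w2 : H := w - w1 with hw2def
  have hw1K : w1 ∈ K := SetLike.coe_mem _
  have hw2o : w2 ∈ Kᗮ := Submodule.sub_starProjection_mem_orthogonal (K := K) w
  have hKo : ∀ x ∈ K, ∀ y ∈ Kᗮ, ⟪x, y⟫ = 0 := fun x hx y hy =>
    (Submodule.mem_orthogonal K y).mp hy x hx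
  have hKo' : ∀ x ∈ K, ∀ y ∈ Kᗮ, ⟪y, x⟫ = 0 := by
    intro x hx y hy
    rw [real_inner_comm]
    exact hKo x hx y hy
  have hmemK : ∀ x, x ∈ K → ∀ χ : H, ⟪x, χ⟫ = lam1 * b x χ := fun x hx => mem_eigsp.mp hx
  have hmemK' : ∀ x : H, (∀ χ : H, ⟪x, χ⟫ = lam1 * b x χ) → x ∈ K := fun x hx => mem_eigsp.mpr hx
  clear_value K u1 u2 w1 w2
  have hbKo : ∀ x ∈ K, ∀ y ∈ Kᗮ, b x y = 0 := by
    intro x hx y hy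
    have h1 : ⟪x, y⟫ = lam1 * b x y := hmemK x hx y
    have h2 := hKo x hx y hy
    have h3 : lam1 * b x y = 0 := h1 ▸ h2
    exact (mul_eq_zero.mp h3).resolve_left hlam1.ne'
  have huu : u = u1 + u2 := by rw [hu2def]; abel
  have hww : w = w1 + w2 := by rw [hw2def]; abel
  set B1 : ℝ := b u1 u1 with hB1def
  set B2 : ℝ := b u2 u2 with hB2def
  have hbu12 : b u1 u2 = 0 := hbKo u1 hu1K u2 hu2o
  have hbu21 : b u2 u1 = 0 := by rw [hb_symm]; exact hbu12
  have hB1nn : 0 ≤ B1 := hbnn u1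
  have hB2nn : 0 ≤ B2 := hbnn u2
  have hBsum : B1 + B2 = 1 := by
    have : b u u = B1 + B2 := by
      rw [huu]
      simp only [map_add, LinearMap.add_apply, hB1def, hB2def]
      rw [hbu12, hbu21]
      ring
    rw [hu] at this
    linarith only [this]
  have hB1le : B1 ≤ 1 := by linarith only [hBsum, hB2nn]
  have hu12 : ⟪u1, u2⟫ = 0 := hKo u1 hu1K u2 hu2o
  have hn1 : ‖u1‖ ^ 2 = lam1 * B1 := by
    have h := hmemK u1 hu1K u1
    rwa [real_inner_self_eq_norm_sq] at h
  clear_value B1 B2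
  have hlamsplit : lam = ‖u1‖ ^ 2 + ‖u2‖ ^ 2 := by
    rw [hlam_eq, huu, norm_add_sq_real, hu12]
    ring
  set d : ℝ := lam - lam1 with hd_def
  have hd0 : 0 ≤ d := by rw [hd_def]; linarith only [hlam1le]
  have hdle : d ≤ lam2 - lam1 := by rw [hd_def]; linarith only [hlt]
  have hdeq : ‖u2‖ ^ 2 = d + lam1 * B2 := by
    rw [hd_def]
    have hthis := hlamsplit
    rw [hn1] at hthis
    linear_combination (-lam1) * hBsum - hthis
  clear_value d
  -- identify w1
  set p : H := w1 + (d / lam1) • u1 with hp_def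
  have hpK : p ∈ K := K.add_mem hw1K (K.smul_mem _ hu1K)
  clear_value p
  have hpz : ∀ χ, χ ∈ K → ⟪p, χ⟫ = 0 := by
    intro χ hχ
    have h2 : ⟪w2, χ⟫ = 0 := hKo' χ hχ w2 hw2o
    have h3 := hw χ
    have h4a : ⟪u1, χ⟫ = lam1 * b u1 χ := hmemK u1 hu1K χ
    have h4b : ⟪u2, χ⟫ = 0 := hKo' χ hχ u2 hu2o
    have h6 : ⟪u, χ⟫ = ⟪u1, χ⟫ + ⟪u2, χ⟫ := by rw [huu, inner_add_left]
    have h7 : b u χ = b u1 χ + b u2 χ := by rw [huu]; simp [map_add, LinearMap.add_apply]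
    have h8 : b u2 χ = 0 := by rw [hb_symm]; exact hbKo χ hχ u2 hu2o
    have h9 : ⟪w, χ⟫ = ⟪w1, χ⟫ + ⟪w2, χ⟫ := by rw [hww, inner_add_left]
    have hw1χ : ⟪w1, χ⟫ = (lam1 - lam) * b u1 χ := by
      linear_combination -h9 - h2 + h3 + h6 + h4a + h4b - lam * h7 - lam * h8
    rw [hp_def, inner_add_left, real_inner_smul_left, hw1χ, h4a, hd_def]
    field_simp
    ring
  have hp0 : p = 0 := by
    have h := hpz p hpK
    exact inner_self_eq_zero.mp h
  have hw1eq : w1 = -((d / lam1) • u1) := by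
    have h : w1 + (d / lam1) • u1 = 0 := by rw [← hp_def]; exact hp0
    exact eq_neg_of_add_eq_zero_left h
  have hw1sq : ‖w1‖ ^ 2 ≤ d ^ 2 / lam1 := by
    have e0 : ‖w1‖ ^ 2 = d ^ 2 * B1 / lam1 := by
      rw [hw1eq, norm_neg, norm_smul, mul_pow, hn1, Real.norm_eq_abs, sq_abs]
      field_simp
    rw [e0]
    have hnum : d ^ 2 * B1 ≤ d ^ 2 := by
      have h := mul_le_mul_of_nonneg_left hB1le (sq_nonneg d)
      linarith only [h]
    exact (div_le_div_iff_of_pos_right hlam1).mpr hnum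
  -- the z part
  set z : H := u2 - w2 with hz_def
  have hzo : z ∈ Kᗮ := Submodule.sub_mem _ hu2o hw2o
  clear_value z
  have hid : ∀ χ, χ ∈ Kᗮ → ⟪z, χ⟫ = lam * b u2 χ := by
    intro χ hχ
    have h2 : ⟪w1, χ⟫ = 0 := hKo w1 hw1K χ hχ
    have h3 := hw χ
    have h4 : ⟪u1, χ⟫ = 0 := hKo u1 hu1K χ hχ
    have h5 : b u1 χ = 0 := hbKo u1 hu1K χ hχ
    have h6 : ⟪u, χ⟫ = ⟪u1, χ⟫ + ⟪u2, χ⟫ := by rw [huu, inner_add_left]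
    have h7 : b u χ = b u1 χ + b u2 χ := by rw [huu]; simp [map_add, LinearMap.add_apply]
    have h9 : ⟪w, χ⟫ = ⟪w1, χ⟫ + ⟪w2, χ⟫ := by rw [hww, inner_add_left]
    have h10 : ⟪z, χ⟫ = ⟪u2, χ⟫ - ⟪w2, χ⟫ := by rw [hz_def, inner_sub_left]
    linear_combination h10 + h9 + h2 - h3 - h6 - h4 + lam * h7 + lam * h5
  have hz1 : ‖z‖ ^ 2 = lam * b u2 z := by
    have h := hid z hzo
    rwa [real_inner_self_eq_norm_sq] at h
  have hz2 : lam2 * b z z ≤ ‖z‖ ^ 2 := by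
    rcases eq_or_ne z 0 with h0 | h0
    · simp [h0]
    · have horth : ∀ χ₁ : H, (∀ χ : H, ⟪χ₁, χ⟫ = lam1 * b χ₁ χ) → b z χ₁ = 0 := by
        intro χ₁ hχ₁
        have hχK : χ₁ ∈ K := hmemK' χ₁ hχ₁
        rw [hb_symm]
        exact hbKo χ₁ hχK z hzo
      have h1 := hmin2 z h0 horth
      rw [rayleigh] at h1
      have hzz := hb_pos z h0
      calc lam2 * b z z ≤ (‖z‖ ^ 2 / b z z) * b z z :=
            mul_le_mul_of_nonneg_right h1 hzz.le
        _ = ‖z‖ ^ 2 := by field_simp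
  have hz3 : (b u2 z) ^ 2 ≤ B2 * b z z := by rw [hB2def]; exact hbcs u2 z
  have hz4 : lam2 * ‖z‖ ^ 2 ≤ lam ^ 2 * B2 := by
    rcases eq_or_ne z 0 with h0 | h0
    · rw [h0]
      simp only [norm_zero]
      have h1 : lam2 * (0:ℝ) ^ 2 = 0 := by ring
      rw [h1]
      exact mul_nonneg (sq_nonneg lam) hB2nn
    · have hzpos : 0 < ‖z‖ ^ 2 := pow_pos (norm_pos_iff.mpr h0) 2
      have e1 : lam2 * (‖z‖ ^ 2 * ‖z‖ ^ 2) = lam ^ 2 * (lam2 * (b u2 z) ^ 2) := by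
        rw [hz1]; ring
      have s1 : lam2 * (b u2 z) ^ 2 ≤ lam2 * (B2 * b z z) :=
        mul_le_mul_of_nonneg_left hz3 hlam2pos.le
      have s2 : lam ^ 2 * (lam2 * (b u2 z) ^ 2) ≤ lam ^ 2 * (lam2 * (B2 * b z z)) :=
        mul_le_mul_of_nonneg_left s1 (sq_nonneg lam)
      have s3 : B2 * (lam2 * b z z) ≤ B2 * ‖z‖ ^ 2 := mul_le_mul_of_nonneg_left hz2 hB2nn
      have s4 : lam ^ 2 * (B2 * (lam2 * b z z)) ≤ lam ^ 2 * (B2 * ‖z‖ ^ 2) :=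
        mul_le_mul_of_nonneg_left s3 (sq_nonneg lam)
      have hkey : lam2 * ‖z‖ ^ 2 * ‖z‖ ^ 2 ≤ lam ^ 2 * B2 * ‖z‖ ^ 2 := by
        calc lam2 * ‖z‖ ^ 2 * ‖z‖ ^ 2 = lam2 * (‖z‖ ^ 2 * ‖z‖ ^ 2) := by ring
          _ = lam ^ 2 * (lam2 * (b u2 z) ^ 2) := e1
          _ ≤ lam ^ 2 * (lam2 * (B2 * b z z)) := s2
          _ = lam ^ 2 * (B2 * (lam2 * b z z)) := by ring
          _ ≤ lam ^ 2 * (B2 * ‖z‖ ^ 2) := s4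
          _ = lam ^ 2 * B2 * ‖z‖ ^ 2 := by ring
      exact le_of_mul_le_mul_right hkey hzpos
  have hip : ⟪u2, z⟫ = lam * B2 := by
    have h := hid u2 hu2o
    rw [real_inner_comm] at h
    rw [hB2def]
    exact h
  have hw2sq : ‖w2‖ ^ 2 ≤ d := by
    have hw2z : w2 = u2 - z := by rw [hz_def]; abel
    have e1 : ‖w2‖ ^ 2 = ‖u2‖ ^ 2 - 2 * (lam * B2) + ‖z‖ ^ 2 := by
      rw [hw2z, norm_sub_sq_real, hip]
    have hq : lam ^ 2 ≤ lam2 * (2 * lam - lam1) := by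
      have hq1 := mul_nonneg (sub_nonneg.mpr hlam1le) (sub_nonneg.mpr hlt.le)
      have hq2 := mul_nonneg hlam0.le (sub_nonneg.mpr hlam12.le)
      nlinarith only [hq1, hq2]
    have hfin : lam2 * ‖w2‖ ^ 2 ≤ lam2 * d := by
      have hqB := mul_le_mul_of_nonneg_right hq hB2nn
      have e1' : lam2 * ‖w2‖ ^ 2 = lam2 * ‖u2‖ ^ 2 - 2 * lam * lam2 * B2 + lam2 * ‖z‖ ^ 2 := by
        linear_combination lam2 * e1
      have hdeq' : lam2 * ‖u2‖ ^ 2 = lam2 * d + lam2 * lam1 * B2 := by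
        linear_combination lam2 * hdeq
      nlinarith only [hz4, hqB, e1', hdeq']
    exact le_of_mul_le_mul_left hfin hlam2pos
  have hw12 : ⟪w1, w2⟫ = 0 := hKo w1 hw1K w2 hw2o
  have hwsplit : ‖w‖ ^ 2 = ‖w1‖ ^ 2 + ‖w2‖ ^ 2 := by
    rw [hww, norm_add_sq_real, hw12]
    ring
  have hwd : ‖w‖ ^ 2 ≤ (lam2 / lam1) * d := by
    have h1 : ‖w‖ ^ 2 ≤ d ^ 2 / lam1 + d := by linarith only [hw1sq, hw2sq, hwsplit]
    have h3 : d ^ 2 + lam1 * d ≤ lam2 * d := by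
      have hh := mul_nonneg hd0 (sub_nonneg.mpr hdle)
      nlinarith only [hh]
    have h2 : d ^ 2 / lam1 + d ≤ (lam2 / lam1) * d := by
      rw [div_add' _ _ _ hlam1.ne', div_mul_eq_mul_div, div_le_div_iff₀ hlam1 hlam1]
      nlinarith only [h3, hlam1]
    linarith only [h1, h2]
  -- Part 2: the final estimate
  set β : ℝ := b v v with hβ_def
  have hβnn : 0 ≤ β := hbnn v
  have hβle : lam1 * β ≤ ‖v‖ ^ 2 := hbbound v
  have hβ4 : β ≤ 1 / 4 := by nlinarith only [hβle, hv2, hlam1]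
  have hsβnn : 0 ≤ Real.sqrt β := Real.sqrt_nonneg β
  have hsβ : Real.sqrt β ≤ 1 / 2 := by
    have h14 : Real.sqrt (1 / 4 : ℝ) = 1 / 2 := by
      rw [show (1 / 4 : ℝ) = (1 / 2) ^ 2 by norm_num, Real.sqrt_sq (by norm_num)]
    calc Real.sqrt β ≤ Real.sqrt (1 / 4) := Real.sqrt_le_sqrt hβ4
      _ = 1 / 2 := h14
  have hββ : Real.sqrt β ^ 2 = β := Real.sq_sqrt hβnn
  set s : ℝ := Real.sqrt (b (u - v) (u - v)) with hs_def
  have hbuv2 : (b u v) ^ 2 ≤ β := by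
    have h := hbcs u v
    rwa [hu, one_mul] at h
  clear_value β
  have hbuvle : b u v ≤ Real.sqrt β := by
    calc b u v ≤ |b u v| := le_abs_self _
      _ = Real.sqrt ((b u v) ^ 2) := (Real.sqrt_sq_eq_abs _).symm
      _ ≤ Real.sqrt β := Real.sqrt_le_sqrt hbuv2
  have hbuvge : -Real.sqrt β ≤ b u v := by
    have h1 : -|b u v| ≤ b u v := neg_abs_le _
    have h2 : |b u v| ≤ Real.sqrt β := by
      calc |b u v| = Real.sqrt ((b u v) ^ 2) := (Real.sqrt_sq_eq_abs _).symm
        _ ≤ Real.sqrt β := Real.sqrt_le_sqrt hbuv2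
    linarith only [h1, h2]
  have hsq : b (u - v) (u - v) = 1 - 2 * b u v + β := by
    simp only [map_sub, LinearMap.sub_apply]
    rw [hu, hb_symm v u, ← hβ_def]
    ring
  have hslb : 1 - Real.sqrt β ≤ s := by
    have h1 : (1 - Real.sqrt β) ^ 2 ≤ b (u - v) (u - v) := by
      rw [hsq]
      nlinarith only [hββ, hbuvle]
    calc 1 - Real.sqrt β = Real.sqrt ((1 - Real.sqrt β) ^ 2) :=
          (Real.sqrt_sq (by linarith only [hsβ])).symm
      _ ≤ s := Real.sqrt_le_sqrt h1
  have hsub : s ≤ 1 + Real.sqrt β := by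
    have h1 : b (u - v) (u - v) ≤ (1 + Real.sqrt β) ^ 2 := by
      rw [hsq]
      nlinarith only [hββ, hbuvge]
    calc s ≤ Real.sqrt ((1 + Real.sqrt β) ^ 2) := Real.sqrt_le_sqrt h1
      _ = 1 + Real.sqrt β := Real.sqrt_sq (by linarith only [hsβnn])
  clear_value s
  have hshalf : 1 / 2 ≤ s := by linarith only [hslb, hsβ]
  have hspos : 0 < s := by linarith only [hshalf]
  have hsinv2 : s⁻¹ ≤ 2 := by
    rw [show (2:ℝ) = (1/2)⁻¹ by norm_num]
    exact (inv_anti₀ (by norm_num) hshalf)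
  have hsinvnn : 0 ≤ s⁻¹ := by positivity
  have habs : |s - 1| ≤ Real.sqrt β :=
    abs_le.mpr ⟨by linarith only [hslb], by linarith only [hsub]⟩
  have hsplit2 : u - s⁻¹ • (u - v) = (1 - s⁻¹) • u + s⁻¹ • v := by
    rw [smul_sub, sub_smul, one_smul]
    abel
  have hnorm_le : ‖u - s⁻¹ • (u - v)‖ ≤ |1 - s⁻¹| * ‖u‖ + s⁻¹ * ‖v‖ := by
    rw [hsplit2]
    refine (norm_add_le _ _).trans ?_
    rw [norm_smul, norm_smul, Real.norm_eq_abs, Real.norm_eq_abs, abs_of_nonneg hsinvnn]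
  have h1s : |1 - s⁻¹| = |s - 1| / s := by
    have h : 1 - s⁻¹ = (s - 1) / s := by field_simp
    rw [h, abs_div, abs_of_pos hspos]
  have husq : ‖u‖ = Real.sqrt lam := by
    rw [hlam_eq]
    exact (Real.sqrt_sq (norm_nonneg u)).symm
  have hterm1 : |1 - s⁻¹| * ‖u‖ ≤ 2 * (Real.sqrt β * Real.sqrt lam) := by
    rw [h1s, husq]
    have hstep : |s - 1| / s ≤ Real.sqrt β * 2 := by
      rw [div_le_iff₀ hspos]
      nlinarith only [habs, hsβnn, hshalf, abs_nonneg (s - 1)]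
    calc |s - 1| / s * Real.sqrt lam ≤ (Real.sqrt β * 2) * Real.sqrt lam := by
          exact mul_le_mul_of_nonneg_right hstep (Real.sqrt_nonneg lam)
      _ = 2 * (Real.sqrt β * Real.sqrt lam) := by ring
  have hterm2 : s⁻¹ * ‖v‖ ≤ 2 * ‖v‖ := mul_le_mul_of_nonneg_right hsinv2 (norm_nonneg v)
  set R : ℝ := Real.sqrt (lam2 / lam1) with hR_def
  have hR0 : 0 ≤ R := Real.sqrt_nonneg _
  clear_value R
  have hβlam : Real.sqrt β * Real.sqrt lam ≤ ‖v‖ * R := by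
    rw [← Real.sqrt_mul hβnn, hR_def]
    have h1 : β * lam ≤ ‖v‖ ^ 2 * (lam2 / lam1) := by
      rw [mul_div_assoc', le_div_iff₀ hlam1]
      have hA := mul_le_mul_of_nonneg_right hβle hlam0.le
      have hC := mul_le_mul_of_nonneg_left hlt.le (sq_nonneg ‖v‖)
      nlinarith only [hA, hC]
    calc Real.sqrt (β * lam) ≤ Real.sqrt (‖v‖ ^ 2 * (lam2 / lam1)) := Real.sqrt_le_sqrt h1
      _ = ‖v‖ * Real.sqrt (lam2 / lam1) := by
          rw [Real.sqrt_mul (sq_nonneg _), Real.sqrt_sq (norm_nonneg v)]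
  have hfin1 : ‖u - s⁻¹ • (u - v)‖ ≤ 2 * (1 + R) * ‖v‖ := by
    nlinarith only [hnorm_le, hterm1, hterm2, hβlam, norm_nonneg v, hR0]
  have hvle : ‖v‖ ≤ (1 + eta) * ‖w‖ := by
    have h1 : v = w + (v - w) := by abel
    calc ‖v‖ = ‖w + (v - w)‖ := by rw [← h1]
      _ ≤ ‖w‖ + ‖v - w‖ := norm_add_le _ _
      _ ≤ ‖w‖ + eta * ‖w‖ := by linarith only [hv]
      _ = (1 + eta) * ‖w‖ := by ring
  have hfin2 : ‖u - s⁻¹ • (u - v)‖ ≤ 2 * (1 + R) * ((1 + eta) * ‖w‖) := by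
    refine hfin1.trans ?_
    exact mul_le_mul_of_nonneg_left hvle (by positivity)
  have hsq2 : ‖u - s⁻¹ • (u - v)‖ ^ 2 ≤ 4 * (1 + R) ^ 2 * (1 + eta) ^ 2 * ‖w‖ ^ 2 := by
    have h := pow_le_pow_left₀ (norm_nonneg _) hfin2 2
    calc ‖u - s⁻¹ • (u - v)‖ ^ 2 ≤ (2 * (1 + R) * ((1 + eta) * ‖w‖)) ^ 2 := h
      _ = 4 * (1 + R) ^ 2 * (1 + eta) ^ 2 * ‖w‖ ^ 2 := by ring
  have hsq3 : ‖u - s⁻¹ • (u - v)‖ ^ 2 ≤ 4 * (1 + R) ^ 2 * (1 + eta) ^ 2 * ((lam2 / lam1) * d) := by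
    refine hsq2.trans ?_
    exact mul_le_mul_of_nonneg_left hwd (by positivity)
  have heta2 : (1 + eta) ^ 2 ≤ (1 + eta) / (1 - eta) := by
    rw [le_div_iff₀ (by linarith only [heta1] : (0:ℝ) < 1 - eta)]
    have hpe : (0:ℝ) ≤ (1 + eta) * eta ^ 2 := mul_nonneg (by linarith only [heta0]) (sq_nonneg eta)
    nlinarith only [hpe]
  have hcd : 0 ≤ (lam2 / lam1) * d := mul_nonneg (by positivity) hd0
  have hlast : 4 * (1 + R) ^ 2 * (1 + eta) ^ 2 * ((lam2 / lam1) * d) ≤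
      4 * (1 + R) ^ 2 * ((1 + eta) / (1 - eta)) * ((lam2 / lam1) * d) := by
    have h := mul_le_mul_of_nonneg_right
      (mul_le_mul_of_nonneg_left heta2 (by positivity : (0:ℝ) ≤ 4 * (1 + R) ^ 2)) hcd
    calc 4 * (1 + R) ^ 2 * (1 + eta) ^ 2 * ((lam2 / lam1) * d)
        = 4 * (1 + R) ^ 2 * (1 + eta) ^ 2 * ((lam2 / lam1) * d) := rfl
      _ ≤ 4 * (1 + R) ^ 2 * ((1 + eta) / (1 - eta)) * ((lam2 / lam1) * d) := h
  calc ‖u - s⁻¹ • (u - v)‖ ^ 2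
      ≤ 4 * (1 + R) ^ 2 * (1 + eta) ^ 2 * ((lam2 / lam1) * d) := hsq3
    _ ≤ 4 * (1 + R) ^ 2 * ((1 + eta) / (1 - eta)) * ((lam2 / lam1) * d) := hlast
    _ = 4 * (1 + R) ^ 2 * ((1 + eta) / (1 - eta)) * (lam2 / lam1) * d := by ring
end

section
/- (Strict decrease away from the eigenspace) Let 0 ≤ η < 1 and let u ∈ H with ‖u‖₀ = 1 and λ₁ < λ(u) < λ₂. Let w solve a(w,χ) = a(u,χ) − λ(u)(u,χ) for all χ ∈ H, let ‖v − w‖ ≤ η‖w‖, and u' = (u − v)/‖u − v‖₀. Then λ(u') < λ(u) strictly. -/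
/-!
With `e = u - v` and `λ = λ(u)`, expanding both quadratic forms and using the equation for `w`
at `χ = v` gives `λ (e,e) - ‖e‖² = ‖w‖² - ‖v - w‖² + λ (v,v)`, which is positive because
`‖v - w‖ ≤ η ‖w‖ < ‖w‖`. Here `w ≠ 0`: otherwise `u` would be an eigenvector with eigenvalue in
`(λ₁, λ₂)`, hence `(·,·)`-orthogonal to `E₁`, forcing `λ(u) ≥ λ₂`. Normalising `e` does not change
its Rayleigh quotient.
-/

open scoped RealInnerProductSpace

section Rayleigh

variable {H : Type*} [NormedAddCommGroup H] [InnerProductSpace ℝ H] {b : LinearMap.BilinForm ℝ H}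

theorem rayleigh_smul {c : ℝ} (hc : c ≠ 0) (x : H) : rayleigh b (c • x) = rayleigh b x := by
  simp only [rayleigh, norm_smul, map_smul, LinearMap.smul_apply, smul_eq_mul, mul_pow,
    Real.norm_eq_abs, sq_abs, ← mul_assoc, ← sq]
  exact mul_div_mul_left _ _ (pow_ne_zero 2 hc)

theorem rayleigh_smul_lt {x : H} {μ : ℝ} (hμ : 0 < μ) (h : rayleigh b x < μ) (c : ℝ) :
    rayleigh b (c • x) < μ := by
  rcases eq_or_ne c 0 with rfl | hc
  · simpa [rayleigh] using hμ
  · rwa [rayleigh_smul hc]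

theorem rayleigh_lt_of_norm_sq_lt {x : H} {μ : ℝ} (hμ : 0 < μ) (h : ‖x‖ ^ 2 < μ * b x x) :
    rayleigh b x < μ := by
  have hbx : 0 < b x x := pos_of_mul_pos_right ((sq_nonneg _).trans_lt h) hμ.le
  rwa [rayleigh, div_lt_iff₀ hbx]

theorem apply_eq_zero_of_eigen_of_ne (hb_symm : ∀ x y : H, b x y = b y x) {x y : H} {μ ν : ℝ}
    (hx : ∀ χ : H, ⟪x, χ⟫ = μ * b x χ) (hy : ∀ χ : H, ⟪y, χ⟫ = ν * b y χ) (hμν : μ ≠ ν) :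
    b x y = 0 := by
  have h : (μ - ν) * b x y = 0 := by
    rw [sub_mul, sub_eq_zero, ← hx, hb_symm, ← hy, real_inner_comm]
  exact (mul_eq_zero.1 h).resolve_left (sub_ne_zero.2 hμν)

theorem eigenvalue_not_mem_Ioo (hb_symm : ∀ x y : H, b x y = b y x) {lam1 lam2 : ℝ}
    (hmin2 : ∀ x : H, x ≠ 0 →
      (∀ χ₁ : H, (∀ χ : H, ⟪χ₁, χ⟫ = lam1 * b χ₁ χ) → b x χ₁ = 0) → lam2 ≤ rayleigh b x)
    {x : H} (hx : x ≠ 0) {μ : ℝ} (heig : ∀ χ : H, ⟪x, χ⟫ = μ * b x χ) :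
    μ ∉ Set.Ioo lam1 lam2 := by
  rintro ⟨h1, h2⟩
  have horth : ∀ χ₁ : H, (∀ χ : H, ⟪χ₁, χ⟫ = lam1 * b χ₁ χ) → b x χ₁ = 0 :=
    fun _ hχ₁ => apply_eq_zero_of_eigen_of_ne hb_symm heig hχ₁ h1.ne'
  have hray : rayleigh b x = μ := by
    have hxx : ‖x‖ ^ 2 = μ * b x x := by rw [← real_inner_self_eq_norm_sq, heig]
    have hbx : b x x ≠ 0 := by
      rintro h0
      exact hx (by simpa [h0] using hxx)
    rw [rayleigh, hxx, mul_div_cancel_right₀ _ hbx]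
  linarith [hmin2 x hx horth]

theorem mul_apply_sub_sub_norm_sub_sq (hb_symm : ∀ x y : H, b x y = b y x) {u v w : H} {μ : ℝ}
    (hwv : ⟪w, v⟫ = ⟪u, v⟫ - μ * b u v) :
    μ * b (u - v) (u - v) - ‖u - v‖ ^ 2
      = μ * b u u - ‖u‖ ^ 2 + (‖w‖ ^ 2 - ‖v - w‖ ^ 2) + μ * b v v := by
  rw [norm_sub_sq_real, norm_sub_sq_real, real_inner_comm w v, hwv]
  simp only [map_sub, LinearMap.sub_apply, hb_symm v u]
  ring

end Rayleigh

theorem rayleigh_strict_decrease_general {H : Type*} [NormedAddCommGroup H] [InnerProductSpace ℝ H]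
    (b : LinearMap.BilinForm ℝ H)
    (hb_symm : ∀ x y : H, b x y = b y x)
    (hb_pos : ∀ x : H, x ≠ 0 → 0 < b x x)
    (lam1 : ℝ)
    (lam2 : ℝ)
    (hmin2 : ∀ x : H, x ≠ 0 →
      (∀ χ₁ : H, (∀ χ : H, ⟪χ₁, χ⟫ = lam1 * b χ₁ χ) → b x χ₁ = 0) →
      lam2 ≤ rayleigh b x)
    (eta : ℝ) (heta1 : eta < 1)
    (u w v : H) (hu : b u u = 1) (hgt : lam1 < rayleigh b u) (hlt : rayleigh b u < lam2)
    (hw : ∀ χ : H, ⟪w, χ⟫ = ⟪u, χ⟫ - rayleigh b u * b u χ)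
    (hv : ‖v - w‖ ≤ eta * ‖w‖) :
    rayleigh b ((Real.sqrt (b (u - v) (u - v)))⁻¹ • (u - v)) < rayleigh b u := by
  set lam := rayleigh b u
  have hu0 : u ≠ 0 := by rintro rfl; simp at hu
  have hlam_sq : lam = ‖u‖ ^ 2 := by simp [lam, rayleigh, hu]
  have hlam_pos : 0 < lam := hlam_sq ▸ pow_pos (norm_pos_iff.2 hu0) 2
  have hw0 : w ≠ 0 := by
    rintro rfl
    refine eigenvalue_not_mem_Ioo hb_symm hmin2 hu0 (fun χ => ?_) ⟨hgt, hlt⟩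
    linarith [hw χ, inner_zero_left (𝕜 := ℝ) χ]
  have hvw : ‖v - w‖ ^ 2 < ‖w‖ ^ 2 := by
    gcongr
    exact hv.trans_lt (mul_lt_of_lt_one_left (norm_pos_iff.2 hw0) heta1)
  have hbvv : 0 ≤ b v v := by
    rcases eq_or_ne v 0 with rfl | hv0
    · simp
    · exact (hb_pos v hv0).le
  have hdefect := mul_apply_sub_sub_norm_sub_sq hb_symm (hw v)
  refine rayleigh_smul_lt hlam_pos (rayleigh_lt_of_norm_sq_lt hlam_pos ?_) _
  rw [hu, mul_one, ← hlam_sq, sub_self, zero_add] at hdefect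
  linarith [mul_nonneg hlam_pos.le hbvv]

/-- strict decrease of the Rayleigh quotient away from the eigenspace. -/
theorem rayleigh_strict_decrease {H : Type*} [NormedAddCommGroup H] [InnerProductSpace ℝ H] [CompleteSpace H]
    (b : LinearMap.BilinForm ℝ H)
    (hb_symm : ∀ x y : H, b x y = b y x)
    (hb_pos : ∀ x : H, x ≠ 0 → 0 < b x x)
    (lam1 : ℝ) (hlam1 : 0 < lam1)
    (hmin : ∀ x : H, x ≠ 0 → lam1 ≤ rayleigh b x)
    (hE1 : ∃ x : H, x ≠ 0 ∧ ∀ χ : H, ⟪ x, χ⟫ = lam1 * b x χ)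
    (lam2 : ℝ) (hlam12 : lam1 < lam2)
    (hmin2 : ∀ x : H, x ≠ 0 →
      (∀ χ₁ : H, (∀ χ : H, ⟪χ₁, χ⟫ = lam1 * b χ₁ χ) → b x χ₁ = 0) →
      lam2 ≤ rayleigh b x)
    (eta : ℝ) (heta0 : 0 ≤ eta) (heta1 : eta < 1)
    (u w v : H) (hu : b u u = 1) (hgt : lam1 < rayleigh b u) (hlt : rayleigh b u < lam2)
    (hw : ∀ χ : H, ⟪w, χ⟫ = ⟪u, χ⟫ - rayleigh b u * b u χ)
    (hv : ‖v - w‖ ≤ eta * ‖w‖) :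
    rayleigh b ((Real.sqrt (b (u - v) (u - v)))⁻¹ • (u - v)) < rayleigh b u :=
  rayleigh_strict_decrease_general b hb_symm hb_pos lam1 lam2 hmin2 eta heta1 u w v hu hgt hlt hw hv
end

section
/- (Theorem 3.2) For every u ∈ H with ‖u‖₀ = 1 and λ(u) < λ₂, the distance in the energy norm of u to its best approximation P₁u in the eigenspace E₁ satisfies ‖u − P₁u‖² ≤ (λ₂/(λ₂ − λ₁)) (λ(u) − λ₁). -/
/-!
Split `u = P₁u + w` with `w = u - P₁u`. Since `P₁u` is an eigenvector that is `b`-orthogonal to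
`w`, it is also energy-orthogonal to `w`, and the excess `‖x‖² - λ₁ b(x,x)` of `u` equals that of
`w`; for `b(u,u) = 1` the former is `λ(u) - λ₁`. As `w ⊥ E₁`, the second eigenvalue bound gives
`λ₂ b(w,w) ≤ ‖w‖²`, and eliminating `b(w,w)` between these two relations yields the estimate.
-/

open scoped RealInnerProductSpace

section

variable {H : Type*} [NormedAddCommGroup H] [InnerProductSpace ℝ H] (b : LinearMap.BilinForm ℝ H)

theorem norm_sq_sub_mul_add_of_eigen {lam : ℝ} {p w : H} (hp : ∀ χ, ⟪p, χ⟫ = lam * b p χ)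
    (hpw : b p w = 0) (hwp : b w p = 0) :
    ‖p + w‖ ^ 2 - lam * b (p + w) (p + w) = ‖w‖ ^ 2 - lam * b w w := by
  have hinner : ⟪p, w⟫ = 0 := by rw [hp, hpw, mul_zero]
  have hp_norm : ‖p‖ ^ 2 = lam * b p p := by rw [← real_inner_self_eq_norm_sq, hp]
  rw [norm_add_sq_real, hinner, hp_norm]
  simp only [map_add, LinearMap.add_apply, hpw, hwp]
  ring

theorem mul_le_norm_sq_of_le_rayleigh (hb_pos : ∀ x : H, x ≠ 0 → 0 < b x x) {lam : ℝ} {w : H}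
    (h : w ≠ 0 → lam ≤ rayleigh b w) : lam * b w w ≤ ‖w‖ ^ 2 := by
  rcases eq_or_ne w 0 with rfl | hw
  · simp
  · exact (le_div_iff₀ (hb_pos w hw)).1 (h hw)

end

theorem le_div_sub_mul_sub_mul {lam1 lam2 N β : ℝ} (hlam1 : 0 ≤ lam1) (hlam12 : lam1 < lam2)
    (h : lam2 * β ≤ N) : N ≤ lam2 / (lam2 - lam1) * (N - lam1 * β) := by
  rw [div_mul_eq_mul_div, le_div_iff₀ (sub_pos.2 hlam12)]
  nlinarith [mul_le_mul_of_nonneg_left h hlam1]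

theorem distance_to_eigenspace_bound_general {H : Type*} [NormedAddCommGroup H] [InnerProductSpace ℝ H]
    (b : LinearMap.BilinForm ℝ H)
    (hb_symm : ∀ x y : H, b x y = b y x)
    (hb_pos : ∀ x : H, x ≠ 0 → 0 < b x x)
    (lam1 : ℝ) (hlam1 : 0 < lam1)
    (lam2 : ℝ) (hlam12 : lam1 < lam2)
    (hmin2 : ∀ x : H, x ≠ 0 →
      (∀ χ₁ : H, (∀ χ : H, ⟪χ₁, χ⟫ = lam1 * b χ₁ χ) → b x χ₁ = 0) →
      lam2 ≤ rayleigh b x)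
    (P₁ : H →ₗ[ℝ] H)
    (hP₁mem : ∀ x : H, ∀ χ : H, ⟪P₁ x, χ⟫ = lam1 * b (P₁ x) χ)
    (hP₁orth : ∀ x : H, ∀ χ₁ : H, (∀ χ : H, ⟪χ₁, χ⟫ = lam1 * b χ₁ χ) → b (x - P₁ x) χ₁ = 0)
    (u : H) (hu : b u u = 1) :
    ‖u - P₁ u‖ ^ 2 ≤ lam2 / (lam2 - lam1) * (rayleigh b u - lam1) := by
  set w := u - P₁ u
  have hwp : b w (P₁ u) = 0 := hP₁orth u (P₁ u) (hP₁mem u)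
  have hexcess : rayleigh b u - lam1 = ‖w‖ ^ 2 - lam1 * b w w := by
    rw [rayleigh, hu, div_one]
    have h := norm_sq_sub_mul_add_of_eigen b (hP₁mem u) (by rw [hb_symm, hwp]) hwp
    rwa [add_sub_cancel, hu, mul_one] at h
  have hgap : lam2 * b w w ≤ ‖w‖ ^ 2 :=
    mul_le_norm_sq_of_le_rayleigh b hb_pos fun hw => hmin2 w hw (hP₁orth u)
  rw [hexcess]
  exact le_div_sub_mul_sub_mul hlam1.le hlam12 hgap

/-- Theorem 3.2: `‖u − P₁u‖² ≤ (λ₂/(λ₂ − λ₁))(λ(u) − λ₁)`. -/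
theorem distance_to_eigenspace_bound {H : Type*} [NormedAddCommGroup H] [InnerProductSpace ℝ H] [CompleteSpace H]
    (b : LinearMap.BilinForm ℝ H)
    (hb_symm : ∀ x y : H, b x y = b y x)
    (hb_pos : ∀ x : H, x ≠ 0 → 0 < b x x)
    (lam1 : ℝ) (hlam1 : 0 < lam1)
    (hmin : ∀ x : H, x ≠ 0 → lam1 ≤ rayleigh b x)
    (hE1 : ∃ x : H, x ≠ 0 ∧ ∀ χ : H, ⟪ x, χ⟫ = lam1 * b x χ)
    (lam2 : ℝ) (hlam12 : lam1 < lam2)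
    (hmin2 : ∀ x : H, x ≠ 0 →
      (∀ χ₁ : H, (∀ χ : H, ⟪χ₁, χ⟫ = lam1 * b χ₁ χ) → b x χ₁ = 0) →
      lam2 ≤ rayleigh b x)
    (P₁ : H →ₗ[ℝ] H)
    (hP₁mem : ∀ x : H, ∀ χ : H, ⟪P₁ x, χ⟫ = lam1 * b (P₁ x) χ)
    (hP₁orth : ∀ x : H, ∀ χ₁ : H, (∀ χ : H, ⟪χ₁, χ⟫ = lam1 * b χ₁ χ) → b (x - P₁ x) χ₁ = 0)
    (u : H) (hu : b u u = 1) (hlt : rayleigh b u < lam2) :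
    ‖u - P₁ u‖ ^ 2 ≤ lam2 / (lam2 - lam1) * (rayleigh b u - lam1) :=
  distance_to_eigenspace_bound_general b hb_symm hb_pos lam1 hlam1 lam2 hlam12 hmin2 P₁ hP₁mem
    hP₁orth u hu
end
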